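/- arXiv:1308.5420 — 4 statements merged into one kernel-verified Lean document; each statement's English description precedes it below -/
import Mathlib

section
/- For every positive integer n, the n×n square admits no dissection into exactly 3 integer-sided squares. -/
/-- The closed square with lower-left corner `(q.1, q.2.1)` and side `q.2.2`,
as a subset of the plane. -/
def closedSq (q : ℕ × ℕ × ℕ) : Set (ℝ × ℝ) :=
  Set.Icc (q.1 : ℝ) (q.1 + q.2.2) ×ˢ Set.Icc (q.2.1 : ℝ) (q.2.1 + q.2.2)

/-- The interior (open square) of the placed square `q`. -/
def openSq (q : ℕ × ℕ × ℕ) : Set (ℝ × ℝ) :=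
  Set.Ioo (q.1 : ℝ) (q.1 + q.2.2) ×ˢ Set.Ioo (q.2.1 : ℝ) (q.2.1 + q.2.2)

/-- `D` is a dissection of the `n × n` square: a finite family of axis-aligned
squares with positive integer side lengths and integer lower-left corners, whose
interiors are pairwise disjoint and whose union is `[0,n] × [0,n]`.  Its order is
`D.card`. -/
def IsDissection (n : ℕ) (D : Finset (ℕ × ℕ × ℕ)) : Prop :=
  (∀ q ∈ D, 0 < q.2.2) ∧
  (⋃ q ∈ D, closedSq q) = Set.Icc (0 : ℝ) (n : ℝ) ×ˢ Set.Icc (0 : ℝ) (n : ℝ) ∧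
  (∀ q ∈ D, ∀ q' ∈ D, q ≠ q' → openSq q ∩ openSq q' = ∅)

/-- A dissection is prime if the gcd of the side lengths of its squares is 1. -/
def IsPrimeDissection (n : ℕ) (D : Finset (ℕ × ℕ × ℕ)) : Prop :=
  IsDissection n D ∧ D.gcd (fun q => q.2.2) = 1

theorem no_order_three_dissection :
    ∀ n : ℕ, 0 < n → ¬ ∃ D : Finset (ℕ × ℕ × ℕ), IsDissection n D ∧ D.card = 3 := by
  rintro n hn ⟨D, ⟨hpos, hcover, hdisj⟩, hcard⟩
  have hnR : (0:ℝ) < n := by exact_mod_cast hn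
  -- every square is contained in the big square
  have hsub : ∀ q ∈ D, ∀ p : ℝ × ℝ, p ∈ closedSq q →
      p ∈ Set.Icc (0:ℝ) n ×ˢ Set.Icc (0:ℝ) n := by
    intro q hq p hp
    rw [← hcover]
    exact Set.mem_biUnion hq hp
  have hbnd : ∀ q ∈ D, 0 ≤ (q.1:ℝ) ∧ 0 ≤ (q.2.1:ℝ) ∧
      (q.1:ℝ) + q.2.2 ≤ n ∧ (q.2.1:ℝ) + q.2.2 ≤ n := by
    rintro ⟨a,b,s⟩ hq
    have hs0 : (0:ℝ) ≤ s := Nat.cast_nonneg s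
    have h1 := hsub _ hq ((a:ℝ), (b:ℝ)) (by
      simp only [closedSq, Set.mem_prod, Set.mem_Icc]
      refine ⟨⟨le_refl _, ?_⟩, le_refl _, ?_⟩ <;> linarith)
    have h2 := hsub _ hq ((a:ℝ)+s, (b:ℝ)+s) (by
      simp only [closedSq, Set.mem_prod, Set.mem_Icc]
      refine ⟨⟨?_, le_refl _⟩, ?_, le_refl _⟩ <;> linarith)
    simp only [Set.mem_prod, Set.mem_Icc] at h1 h2
    exact ⟨h1.1.1, h1.2.1, h2.1.2, h2.2.2⟩
  -- a square reaching both opposite sides must be the whole square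
  have hbig : ∀ q ∈ D,
      (((q.1:ℝ) ≤ 0 ∧ (n:ℝ) ≤ q.1 + q.2.2) ∨
       ((q.2.1:ℝ) ≤ 0 ∧ (n:ℝ) ≤ q.2.1 + q.2.2)) → q = (0, 0, n) := by
    rintro ⟨a,b,s⟩ hq h
    obtain ⟨ha0, hb0, han, hbn⟩ := hbnd _ hq
    simp only at ha0 hb0 han hbn h
    rcases h with ⟨h1,h2⟩ | ⟨h1,h2⟩
    · have ea : a = 0 := by exact_mod_cast le_antisymm h1 ha0
      have es : s = n := by
        have : (s:ℝ) = n := by linarith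
        exact_mod_cast this
      have eb : b = 0 := by
        have : (b:ℝ) = 0 := by
          have : (s:ℝ) = n := by exact_mod_cast es
          linarith
        exact_mod_cast this
      subst ea; subst eb; subst es; rfl
    · have eb : b = 0 := by exact_mod_cast le_antisymm h1 hb0
      have es : s = n := by
        have : (s:ℝ) = n := by linarith
        exact_mod_cast this
      have ea : a = 0 := by
        have : (a:ℝ) = 0 := by
          have : (s:ℝ) = n := by exact_mod_cast es
          linarith
        exact_mod_cast this
      subst ea; subst eb; subst es; rfl
  -- if the whole square is a piece, contradiction
  have hfinal : ((0,0,n) : ℕ × ℕ × ℕ) ∈ D → False := by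
    intro hmem
    have h2 : 0 < (D.erase (0,0,n)).card := by
      rw [Finset.card_erase_of_mem hmem, hcard]; omega
    obtain ⟨q', hq'⟩ := Finset.card_pos.mp h2
    have hq'D : q' ∈ D := Finset.mem_of_mem_erase hq'
    have hne : q' ≠ (0,0,n) := Finset.ne_of_mem_erase hq'
    have hd := hdisj _ hq'D _ hmem hne
    obtain ⟨ha0, hb0, han, hbn⟩ := hbnd _ hq'D
    obtain ⟨a,b,s⟩ := q'
    have hs : 0 < s := hpos _ hq'D
    have hsR : (0:ℝ) < s := by exact_mod_cast hs
    simp only at ha0 hb0 han hbn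
    have hmem2 : ((a:ℝ) + s/2, (b:ℝ) + s/2) ∈ openSq (a,b,s) ∩ openSq (0,0,n) := by
      simp only [openSq, Set.mem_inter_iff, Set.mem_prod, Set.mem_Ioo, Nat.cast_zero,
        zero_add]
      refine ⟨⟨⟨?_,?_⟩,⟨?_,?_⟩⟩,⟨⟨?_,?_⟩,⟨?_,?_⟩⟩⟩ <;> linarith
    rw [hd] at hmem2
    exact hmem2
  -- each corner lies in some square
  have hcorner : ∀ p : ℝ × ℝ, p ∈ Set.Icc (0:ℝ) n ×ˢ Set.Icc (0:ℝ) n →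
      ∃ q ∈ D, p ∈ closedSq q := by
    intro p hp
    rw [← hcover] at hp
    simpa using hp
  obtain ⟨q0, hq0, hm0⟩ := hcorner (0,0)
    ⟨Set.mem_Icc.mpr ⟨le_refl _, hnR.le⟩, Set.mem_Icc.mpr ⟨le_refl _, hnR.le⟩⟩
  obtain ⟨q1, hq1, hm1⟩ := hcorner ((n:ℝ),0)
    ⟨Set.mem_Icc.mpr ⟨hnR.le, le_refl _⟩, Set.mem_Icc.mpr ⟨le_refl _, hnR.le⟩⟩
  obtain ⟨q2, hq2, hm2⟩ := hcorner (0,(n:ℝ))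
    ⟨Set.mem_Icc.mpr ⟨le_refl _, hnR.le⟩, Set.mem_Icc.mpr ⟨hnR.le, le_refl _⟩⟩
  obtain ⟨q3, hq3, hm3⟩ := hcorner ((n:ℝ),(n:ℝ))
    ⟨Set.mem_Icc.mpr ⟨hnR.le, le_refl _⟩, Set.mem_Icc.mpr ⟨hnR.le, le_refl _⟩⟩
  simp only [closedSq, Set.mem_prod, Set.mem_Icc] at hm0 hm1 hm2 hm3
  by_cases h01 : q0 = q1
  · exact hfinal ((hbig q1 hq1 (Or.inl ⟨h01 ▸ hm0.1.1, hm1.1.2⟩)) ▸ hq1)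
  by_cases h02 : q0 = q2
  · exact hfinal ((hbig q2 hq2 (Or.inr ⟨h02 ▸ hm0.2.1, hm2.2.2⟩)) ▸ hq2)
  by_cases h03 : q0 = q3
  · exact hfinal ((hbig q3 hq3 (Or.inl ⟨h03 ▸ hm0.1.1, hm3.1.2⟩)) ▸ hq3)
  by_cases h12 : q1 = q2
  · exact hfinal ((hbig q2 hq2 (Or.inl ⟨hm2.1.1, h12 ▸ hm1.1.2⟩)) ▸ hq2)
  by_cases h13 : q1 = q3
  · exact hfinal ((hbig q3 hq3 (Or.inr ⟨h13 ▸ hm1.2.1, hm3.2.2⟩)) ▸ hq3)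
  by_cases h23 : q2 = q3
  · exact hfinal ((hbig q3 hq3 (Or.inl ⟨h23 ▸ hm2.1.1, hm3.1.2⟩)) ▸ hq3)
  -- all four distinct: at least 4 squares
  have hsubset : ({q0,q1,q2,q3} : Finset (ℕ × ℕ × ℕ)) ⊆ D := by
    intro x hx
    simp only [Finset.mem_insert, Finset.mem_singleton] at hx
    rcases hx with rfl | rfl | rfl | rfl <;> assumption
  have hc4 : ({q0,q1,q2,q3} : Finset (ℕ × ℕ × ℕ)).card = 4 := by
    rw [Finset.card_insert_of_notMem (by simp [h01, h02, h03]),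
        Finset.card_insert_of_notMem (by simp [h12, h13]),
        Finset.card_insert_of_notMem (by simp [h23]),
        Finset.card_singleton]
  have := Finset.card_le_card hsubset
  omega
end

section
/- For every positive integer n, the n×n square admits no dissection into exactly 5 integer-sided squares. -/
set_option maxHeartbeats 4000000


lemma mem_openSq_pt {q : ℕ × ℕ × ℕ} {u v : ℝ}
    (h1 : (q.1:ℝ) < u) (h2 : u < q.1 + q.2.2) (h3 : (q.2.1:ℝ) < v) (h4 : v < q.2.1 + q.2.2) :
    (u, v) ∈ openSq q := Set.mem_prod.mpr ⟨Set.mem_Ioo.mpr ⟨h1, h2⟩, Set.mem_Ioo.mpr ⟨h3, h4⟩⟩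

lemma mem_openSq_mk {x y s : ℕ} {u v : ℝ}
    (h1 : (x:ℝ) < u) (h2 : u < x + s) (h3 : (y:ℝ) < v) (h4 : v < y + s) :
    (u, v) ∈ openSq (x, y, s) := mem_openSq_pt h1 h2 h3 h4

lemma closedSq_mk_iff {x y s : ℕ} {u v : ℝ} :
    (u, v) ∈ closedSq (x, y, s) ↔ ((x:ℝ) ≤ u ∧ u ≤ x + s) ∧ ((y:ℝ) ≤ v ∧ v ≤ y + s) := by
  constructor
  · intro h
    exact ⟨Set.mem_Icc.mp (Set.mem_prod.mp h).1, Set.mem_Icc.mp (Set.mem_prod.mp h).2⟩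
  · intro h
    exact Set.mem_prod.mpr ⟨Set.mem_Icc.mpr h.1, Set.mem_Icc.mpr h.2⟩

lemma mem_closedSq_pt {q : ℕ × ℕ × ℕ} {u v : ℝ}
    (h1 : (q.1:ℝ) ≤ u) (h2 : u ≤ q.1 + q.2.2) (h3 : (q.2.1:ℝ) ≤ v) (h4 : v ≤ q.2.1 + q.2.2) :
    (u, v) ∈ closedSq q := Set.mem_prod.mpr ⟨Set.mem_Icc.mpr ⟨h1, h2⟩, Set.mem_Icc.mpr ⟨h3, h4⟩⟩

theorem no_order_five_dissection :
    ∀ n : ℕ, 0 < n → ¬ ∃ D : Finset (ℕ × ℕ × ℕ), IsDissection n D ∧ D.card = 5 := by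
  rintro n hn ⟨D, ⟨hpos, hunion, hdisj⟩, hcard⟩
  have nn : ∀ m : ℕ, (0:ℝ) ≤ (m:ℝ) := fun m => Nat.cast_nonneg m
  have hover : ∀ q ∈ D, ∀ q' ∈ D, q ≠ q' → ∀ p : ℝ × ℝ,
      p ∈ openSq q → p ∈ openSq q' → False := by
    intro q hq q' hq' hne p h1 h2
    have h := hdisj q hq q' hq' hne
    exact Set.notMem_empty p (h ▸ (⟨h1, h2⟩ : p ∈ openSq q ∩ openSq q'))
  have hsub : ∀ q ∈ D, closedSq q ⊆ Set.Icc (0:ℝ) (n:ℝ) ×ˢ Set.Icc (0:ℝ) (n:ℝ) := by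
    intro q hq
    rw [← hunion]
    exact Set.subset_biUnion_of_mem hq
  have hcover : ∀ p : ℝ × ℝ, p ∈ Set.Icc (0:ℝ) (n:ℝ) ×ˢ Set.Icc (0:ℝ) (n:ℝ) →
      ∃ q ∈ D, p ∈ closedSq q := by
    intro p hp
    rw [← hunion] at hp
    simpa using hp
  have hbound : ∀ q ∈ D, q.1 + q.2.2 ≤ n ∧ q.2.1 + q.2.2 ≤ n := by
    intro q hq
    have h1 : ((q.1:ℝ) + q.2.2, (q.2.1:ℝ) + q.2.2) ∈ closedSq q :=
      mem_closedSq_pt (by linarith [nn q.2.2]) (le_refl _) (by linarith [nn q.2.2]) (le_refl _)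
    have h2 := hsub q hq h1
    have h3 : (q.1:ℝ) + q.2.2 ≤ n := (Set.mem_Icc.mp (Set.mem_prod.mp h2).1).2
    have h4 : (q.2.1:ℝ) + q.2.2 ≤ n := (Set.mem_Icc.mp (Set.mem_prod.mp h2).2).2
    exact ⟨by exact_mod_cast h3, by exact_mod_cast h4⟩
  have hexists2 : ∀ q ∈ D, ∃ e ∈ D, e ≠ q := by
    intro q hq
    by_contra hcon
    push_neg at hcon
    have hsubq : D ⊆ {q} := fun x hx => Finset.mem_singleton.mpr (hcon x hx)
    have := Finset.card_le_card hsubq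
    rw [hcard, Finset.card_singleton] at this
    omega
  have hltn : ∀ q ∈ D, q.2.2 < n := by
    intro q hq
    have hbq := hbound q hq
    by_contra hge
    push_neg at hge
    have hqx : q.1 = 0 := by omega
    have hqy : q.2.1 = 0 := by omega
    obtain ⟨e, he, hne⟩ := hexists2 _ hq
    have hse : (1:ℝ) ≤ e.2.2 := by exact_mod_cast hpos e he
    have hbe1 : (e.1:ℝ) + e.2.2 ≤ n := by exact_mod_cast (hbound e he).1
    have hbe2 : (e.2.1:ℝ) + e.2.2 ≤ n := by exact_mod_cast (hbound e he).2
    have hqs : (n:ℝ) ≤ q.2.2 := by exact_mod_cast hge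
    refine hover e he q hq hne ((e.1:ℝ) + 1/2, (e.2.1:ℝ) + 1/2)
      (mem_openSq_pt (by linarith) (by linarith) (by linarith) (by linarith))
      (mem_openSq_pt ?_ ?_ ?_ ?_) <;> simp only [hqx, hqy] <;> push_cast <;>
      linarith [nn e.1, nn e.2.1]
  -- extract the four corner squares
  obtain ⟨⟨blx, bly, a⟩, hBL, hBLm⟩ := hcover ((0:ℝ), (0:ℝ))
    (Set.mem_prod.mpr ⟨Set.mem_Icc.mpr ⟨le_refl _, nn n⟩, Set.mem_Icc.mpr ⟨le_refl _, nn n⟩⟩)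
  rw [closedSq_mk_iff] at hBLm
  have hblx : blx = 0 := by
    have h : blx ≤ 0 := by exact_mod_cast hBLm.1.1
    omega
  have hbly : bly = 0 := by
    have h : bly ≤ 0 := by exact_mod_cast hBLm.2.1
    omega
  subst hblx hbly
  obtain ⟨⟨bx, by0, b⟩, hBR, hBRm⟩ := hcover ((n:ℝ), (0:ℝ))
    (Set.mem_prod.mpr ⟨Set.mem_Icc.mpr ⟨nn n, le_refl _⟩, Set.mem_Icc.mpr ⟨le_refl _, nn n⟩⟩)
  rw [closedSq_mk_iff] at hBRm
  have hby0 : by0 = 0 := by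
    have h : by0 ≤ 0 := by exact_mod_cast hBRm.2.1
    omega
  subst hby0
  have hbx : bx + b = n := by
    have h1 : (n:ℝ) ≤ (bx:ℝ) + b := hBRm.1.2
    have h2 : bx + b ≤ n := (hbound _ hBR).1
    have h3 : n ≤ bx + b := by exact_mod_cast h1
    omega
  obtain ⟨⟨tlx, ty, c⟩, hTL, hTLm⟩ := hcover ((0:ℝ), (n:ℝ))
    (Set.mem_prod.mpr ⟨Set.mem_Icc.mpr ⟨le_refl _, nn n⟩, Set.mem_Icc.mpr ⟨nn n, le_refl _⟩⟩)
  rw [closedSq_mk_iff] at hTLm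
  have htlx : tlx = 0 := by
    have h : tlx ≤ 0 := by exact_mod_cast hTLm.1.1
    omega
  subst htlx
  have hty : ty + c = n := by
    have h1 : (n:ℝ) ≤ (ty:ℝ) + c := hTLm.2.2
    have h2 : ty + c ≤ n := (hbound _ hTL).2
    have h3 : n ≤ ty + c := by exact_mod_cast h1
    omega
  obtain ⟨⟨tx, ty2, d⟩, hTR, hTRm⟩ := hcover ((n:ℝ), (n:ℝ))
    (Set.mem_prod.mpr ⟨Set.mem_Icc.mpr ⟨nn n, le_refl _⟩, Set.mem_Icc.mpr ⟨nn n, le_refl _⟩⟩)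
  rw [closedSq_mk_iff] at hTRm
  have htx : tx + d = n := by
    have h1 : (n:ℝ) ≤ (tx:ℝ) + d := hTRm.1.2
    have h2 : tx + d ≤ n := (hbound _ hTR).1
    have h3 : n ≤ tx + d := by exact_mod_cast h1
    omega
  have hty2 : ty2 + d = n := by
    have h1 : (n:ℝ) ≤ (ty2:ℝ) + d := hTRm.2.2
    have h2 : ty2 + d ≤ n := (hbound _ hTR).2
    have h3 : n ≤ ty2 + d := by exact_mod_cast h1
    omega
  -- side facts
  have ha : 0 < a := hpos _ hBL
  have hb : 0 < b := hpos _ hBR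
  have hc : 0 < c := hpos _ hTL
  have hd : 0 < d := hpos _ hTR
  have han : a < n := hltn _ hBL
  have hbn : b < n := hltn _ hBR
  have hcn : c < n := hltn _ hTL
  have hdn : d < n := hltn _ hTR
  -- real casts
  have ra : (1:ℝ) ≤ a := by exact_mod_cast ha
  have rb : (1:ℝ) ≤ b := by exact_mod_cast hb
  have rc : (1:ℝ) ≤ c := by exact_mod_cast hc
  have rd : (1:ℝ) ≤ d := by exact_mod_cast hd
  have rbx : (bx:ℝ) + b = n := by exact_mod_cast hbx
  have rty : (ty:ℝ) + c = n := by exact_mod_cast hty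
  have rtx : (tx:ℝ) + d = n := by exact_mod_cast htx
  have rty2 : (ty2:ℝ) + d = n := by exact_mod_cast hty2
  -- the corners are pairwise distinct
  have neBLBR : ((0,0,a) : ℕ×ℕ×ℕ) ≠ (bx,0,b) := by
    intro h; simp only [Prod.mk.injEq] at h; omega
  have neBLTL : ((0,0,a) : ℕ×ℕ×ℕ) ≠ (0,ty,c) := by
    intro h; simp only [Prod.mk.injEq] at h; omega
  have neBLTR : ((0,0,a) : ℕ×ℕ×ℕ) ≠ (tx,ty2,d) := by
    intro h; simp only [Prod.mk.injEq] at h; omega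
  have neBRTL : ((bx,0,b) : ℕ×ℕ×ℕ) ≠ (0,ty,c) := by
    intro h; simp only [Prod.mk.injEq] at h; omega
  have neBRTR : ((bx,0,b) : ℕ×ℕ×ℕ) ≠ (tx,ty2,d) := by
    intro h; simp only [Prod.mk.injEq] at h; omega
  have neTLTR : ((0,ty,c) : ℕ×ℕ×ℕ) ≠ (tx,ty2,d) := by
    intro h; simp only [Prod.mk.injEq] at h; omega
  -- adjacent corner squares do not overlap: sums ≤ n
  have hab_le : a + b ≤ n := by
    by_contra h
    push_neg at h
    have h1 : (bx:ℝ) + 1 ≤ a := by exact_mod_cast (show bx + 1 ≤ a by omega)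
    exact hover _ hBL _ hBR neBLBR ((bx:ℝ) + 1/2, (1:ℝ)/2)
      (mem_openSq_mk (by push_cast; linarith [nn bx]) (by push_cast; linarith)
        (by push_cast; norm_num) (by push_cast; linarith))
      (mem_openSq_mk (by linarith) (by push_cast; linarith)
        (by push_cast; norm_num) (by push_cast; linarith))
  have hac_le : a + c ≤ n := by
    by_contra h
    push_neg at h
    have h1 : (ty:ℝ) + 1 ≤ a := by exact_mod_cast (show ty + 1 ≤ a by omega)
    exact hover _ hBL _ hTL neBLTL ((1:ℝ)/2, (ty:ℝ) + 1/2)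
      (mem_openSq_mk (by push_cast; norm_num) (by push_cast; linarith)
        (by push_cast; linarith [nn ty]) (by push_cast; linarith))
      (mem_openSq_mk (by push_cast; norm_num) (by push_cast; linarith)
        (by linarith) (by push_cast; linarith))
  have hbd_le : b + d ≤ n := by
    by_contra h
    push_neg at h
    have h1 : (ty2:ℝ) + 1 ≤ b := by exact_mod_cast (show ty2 + 1 ≤ b by omega)
    exact hover _ hBR _ hTR neBRTR ((n:ℝ) - 1/2, (ty2:ℝ) + 1/2)
      (mem_openSq_mk (by linarith) (by push_cast; linarith)
        (by push_cast; linarith [nn ty2]) (by push_cast; linarith))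
      (mem_openSq_mk (by linarith) (by push_cast; linarith)
        (by linarith) (by push_cast; linarith))
  have hcd_le : c + d ≤ n := by
    by_contra h
    push_neg at h
    have h1 : (tx:ℝ) + 1 ≤ c := by exact_mod_cast (show tx + 1 ≤ c by omega)
    exact hover _ hTL _ hTR neTLTR ((tx:ℝ) + 1/2, (n:ℝ) - 1/2)
      (mem_openSq_mk (by push_cast; linarith [nn tx]) (by push_cast; linarith)
        (by linarith) (by push_cast; linarith))
      (mem_openSq_mk (by linarith) (by push_cast; linarith)
        (by linarith) (by push_cast; linarith))
  -- the set of corner squares and the fifth square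
  set T : Finset (ℕ×ℕ×ℕ) := insert (0,0,a) (insert (bx,0,b) (insert (0,ty,c) {(tx,ty2,d)}))
    with hTdef
  have hTsub : T ⊆ D := by
    rw [hTdef]
    simp only [Finset.insert_subset_iff, Finset.singleton_subset_iff]
    exact ⟨hBL, hBR, hTL, hTR⟩
  have hTcard : T.card = 4 := by
    rw [hTdef]
    rw [Finset.card_insert_of_notMem (by
      simp only [Finset.mem_insert, Finset.mem_singleton]
      push_neg
      exact ⟨neBLBR, neBLTL, neBLTR⟩)]
    rw [Finset.card_insert_of_notMem (by
      simp only [Finset.mem_insert, Finset.mem_singleton]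
      push_neg
      exact ⟨neBRTL, neBRTR⟩)]
    rw [Finset.card_insert_of_notMem (by
      simp only [Finset.mem_singleton]
      exact neTLTR)]
    rw [Finset.card_singleton]
  have hsd : (D \ T).card = 1 := by
    rw [Finset.card_sdiff_of_subset hTsub, hcard, hTcard]
  obtain ⟨⟨ex, ey, es⟩, he⟩ := Finset.card_eq_one.mp hsd
  have heD : ((ex,ey,es) : ℕ×ℕ×ℕ) ∈ D ∧ ((ex,ey,es) : ℕ×ℕ×ℕ) ∉ T := by
    have : ((ex,ey,es) : ℕ×ℕ×ℕ) ∈ D \ T := by rw [he]; exact Finset.mem_singleton_self _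
    exact Finset.mem_sdiff.mp this
  obtain ⟨hE, heT⟩ := heD
  have hes : 0 < es := hpos _ hE
  have res : (1:ℝ) ≤ es := by exact_mod_cast hes
  have hesn : es < n := hltn _ hE
  have hbe : ex + es ≤ n ∧ ey + es ≤ n := hbound _ hE
  have heBL : ((ex,ey,es) : ℕ×ℕ×ℕ) ≠ (0,0,a) := by
    intro h; exact heT (by rw [h, hTdef]; exact Finset.mem_insert_self _ _)
  have heBR : ((ex,ey,es) : ℕ×ℕ×ℕ) ≠ (bx,0,b) := by
    intro h; exact heT (by rw [h, hTdef]; simp)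
  have heTL : ((ex,ey,es) : ℕ×ℕ×ℕ) ≠ (0,ty,c) := by
    intro h; exact heT (by rw [h, hTdef]; simp)
  have heTR : ((ex,ey,es) : ℕ×ℕ×ℕ) ≠ (tx,ty2,d) := by
    intro h; exact heT (by rw [h, hTdef]; simp)
  -- gap lemmas
  have hgapB : a + b < n → ey = 0 := by
    intro hlt'
    have hmem : ((a:ℝ) + 1/2, (0:ℝ)) ∈ Set.Icc (0:ℝ) (n:ℝ) ×ˢ Set.Icc (0:ℝ) (n:ℝ) := by
      refine Set.mem_prod.mpr ⟨Set.mem_Icc.mpr ⟨by linarith [nn a], ?_⟩,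
        Set.mem_Icc.mpr ⟨le_refl _, nn n⟩⟩
      have h2 : (a:ℝ) + 1 ≤ n := by exact_mod_cast (show a + 1 ≤ n by omega)
      linarith
    obtain ⟨⟨qx, qy, qs⟩, hq, hqm⟩ := hcover _ hmem
    rw [closedSq_mk_iff] at hqm
    have hqy : qy = 0 := by
      have h : qy ≤ 0 := by exact_mod_cast hqm.2.1
      omega
    have hqx : qx ≤ a := by
      have h1 : (qx:ℝ) < (a:ℝ) + 1 := by linarith [hqm.1.1]
      have h2 : qx < a + 1 := by exact_mod_cast h1
      omega
    have hqxs : a + 1 ≤ qx + qs := by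
      have h1 : (a:ℝ) < (qx:ℝ) + qs := by linarith [hqm.1.2]
      have h2 : a < qx + qs := by exact_mod_cast h1
      omega
    have hqT : ((qx,qy,qs) : ℕ×ℕ×ℕ) ∉ T := by
      rw [hTdef]
      simp only [Finset.mem_insert, Finset.mem_singleton, Prod.mk.injEq, not_or]
      refine ⟨fun h => ?_, fun h => ?_, fun h => ?_, fun h => ?_⟩ <;> omega
    have hqe : ((qx,qy,qs) : ℕ×ℕ×ℕ) = (ex,ey,es) := by
      have : ((qx,qy,qs) : ℕ×ℕ×ℕ) ∈ D \ T := Finset.mem_sdiff.mpr ⟨hq, hqT⟩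
      rw [he] at this
      exact Finset.mem_singleton.mp this
    simp only [Prod.mk.injEq] at hqe
    omega
  have hgapT : c + d < n → ey + es = n := by
    intro hlt'
    have hmem : ((c:ℝ) + 1/2, (n:ℝ)) ∈ Set.Icc (0:ℝ) (n:ℝ) ×ˢ Set.Icc (0:ℝ) (n:ℝ) := by
      refine Set.mem_prod.mpr ⟨Set.mem_Icc.mpr ⟨by linarith [nn c], ?_⟩,
        Set.mem_Icc.mpr ⟨nn n, le_refl _⟩⟩
      have h2 : (c:ℝ) + 1 ≤ n := by exact_mod_cast (show c + 1 ≤ n by omega)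
      linarith
    obtain ⟨⟨qx, qy, qs⟩, hq, hqm⟩ := hcover _ hmem
    rw [closedSq_mk_iff] at hqm
    have hqys : qy + qs = n := by
      have h1 : (n:ℝ) ≤ (qy:ℝ) + qs := hqm.2.2
      have h2 : qy + qs ≤ n := (hbound _ hq).2
      have h3 : n ≤ qy + qs := by exact_mod_cast h1
      omega
    have hqx : qx ≤ c := by
      have h1 : (qx:ℝ) < (c:ℝ) + 1 := by linarith [hqm.1.1]
      have h2 : qx < c + 1 := by exact_mod_cast h1
      omega
    have hqxs : c + 1 ≤ qx + qs := by
      have h1 : (c:ℝ) < (qx:ℝ) + qs := by linarith [hqm.1.2]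
      have h2 : c < qx + qs := by exact_mod_cast h1
      omega
    have hqT : ((qx,qy,qs) : ℕ×ℕ×ℕ) ∉ T := by
      rw [hTdef]
      simp only [Finset.mem_insert, Finset.mem_singleton, Prod.mk.injEq, not_or]
      refine ⟨fun h => ?_, fun h => ?_, fun h => ?_, fun h => ?_⟩ <;> omega
    have hqe : ((qx,qy,qs) : ℕ×ℕ×ℕ) = (ex,ey,es) := by
      have : ((qx,qy,qs) : ℕ×ℕ×ℕ) ∈ D \ T := Finset.mem_sdiff.mpr ⟨hq, hqT⟩
      rw [he] at this
      exact Finset.mem_singleton.mp this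
    simp only [Prod.mk.injEq] at hqe
    omega
  have hgapL : a + c < n → ex = 0 := by
    intro hlt'
    have hmem : ((0:ℝ), (a:ℝ) + 1/2) ∈ Set.Icc (0:ℝ) (n:ℝ) ×ˢ Set.Icc (0:ℝ) (n:ℝ) := by
      refine Set.mem_prod.mpr ⟨Set.mem_Icc.mpr ⟨le_refl _, nn n⟩,
        Set.mem_Icc.mpr ⟨by linarith [nn a], ?_⟩⟩
      have h2 : (a:ℝ) + 1 ≤ n := by exact_mod_cast (show a + 1 ≤ n by omega)
      linarith
    obtain ⟨⟨qx, qy, qs⟩, hq, hqm⟩ := hcover _ hmem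
    rw [closedSq_mk_iff] at hqm
    have hqx : qx = 0 := by
      have h : qx ≤ 0 := by exact_mod_cast hqm.1.1
      omega
    have hqy : qy ≤ a := by
      have h1 : (qy:ℝ) < (a:ℝ) + 1 := by linarith [hqm.2.1]
      have h2 : qy < a + 1 := by exact_mod_cast h1
      omega
    have hqys : a + 1 ≤ qy + qs := by
      have h1 : (a:ℝ) < (qy:ℝ) + qs := by linarith [hqm.2.2]
      have h2 : a < qy + qs := by exact_mod_cast h1
      omega
    have hqT : ((qx,qy,qs) : ℕ×ℕ×ℕ) ∉ T := by
      rw [hTdef]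
      simp only [Finset.mem_insert, Finset.mem_singleton, Prod.mk.injEq, not_or]
      refine ⟨fun h => ?_, fun h => ?_, fun h => ?_, fun h => ?_⟩ <;> omega
    have hqe : ((qx,qy,qs) : ℕ×ℕ×ℕ) = (ex,ey,es) := by
      have : ((qx,qy,qs) : ℕ×ℕ×ℕ) ∈ D \ T := Finset.mem_sdiff.mpr ⟨hq, hqT⟩
      rw [he] at this
      exact Finset.mem_singleton.mp this
    simp only [Prod.mk.injEq] at hqe
    omega
  have hgapR : b + d < n → ex + es = n := by
    intro hlt'
    have hmem : ((n:ℝ), (b:ℝ) + 1/2) ∈ Set.Icc (0:ℝ) (n:ℝ) ×ˢ Set.Icc (0:ℝ) (n:ℝ) := by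
      refine Set.mem_prod.mpr ⟨Set.mem_Icc.mpr ⟨nn n, le_refl _⟩,
        Set.mem_Icc.mpr ⟨by linarith [nn b], ?_⟩⟩
      have h2 : (b:ℝ) + 1 ≤ n := by exact_mod_cast (show b + 1 ≤ n by omega)
      linarith
    obtain ⟨⟨qx, qy, qs⟩, hq, hqm⟩ := hcover _ hmem
    rw [closedSq_mk_iff] at hqm
    have hqxs : qx + qs = n := by
      have h1 : (n:ℝ) ≤ (qx:ℝ) + qs := hqm.1.2
      have h2 : qx + qs ≤ n := (hbound _ hq).1
      have h3 : n ≤ qx + qs := by exact_mod_cast h1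
      omega
    have hqy : qy ≤ b := by
      have h1 : (qy:ℝ) < (b:ℝ) + 1 := by linarith [hqm.2.1]
      have h2 : qy < b + 1 := by exact_mod_cast h1
      omega
    have hqys : b + 1 ≤ qy + qs := by
      have h1 : (b:ℝ) < (qy:ℝ) + qs := by linarith [hqm.2.2]
      have h2 : b < qy + qs := by exact_mod_cast h1
      omega
    have hqT : ((qx,qy,qs) : ℕ×ℕ×ℕ) ∉ T := by
      rw [hTdef]
      simp only [Finset.mem_insert, Finset.mem_singleton, Prod.mk.injEq, not_or]
      refine ⟨fun h => ?_, fun h => ?_, fun h => ?_, fun h => ?_⟩ <;> omega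
    have hqe : ((qx,qy,qs) : ℕ×ℕ×ℕ) = (ex,ey,es) := by
      have : ((qx,qy,qs) : ℕ×ℕ×ℕ) ∈ D \ T := Finset.mem_sdiff.mpr ⟨hq, hqT⟩
      rw [he] at this
      exact Finset.mem_singleton.mp this
    simp only [Prod.mk.injEq] at hqe
    omega
  -- all four sums equal n
  have hab : a + b = n := by
    by_contra h0
    have h1 : a + b < n := lt_of_le_of_ne hab_le h0
    have hey : ey = 0 := hgapB h1
    have hcd : c + d = n := by
      by_contra h2
      have := hgapT (lt_of_le_of_ne hcd_le h2)
      omega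
    have hac : a + c = n := by
      by_contra h2
      have hex : ex = 0 := hgapL (lt_of_le_of_ne hac_le h2)
      refine hover _ hE _ hBL heBL ((1:ℝ)/2, (1:ℝ)/2)
        (mem_openSq_mk ?_ ?_ ?_ ?_) (mem_openSq_mk ?_ ?_ ?_ ?_) <;>
        (try simp only [hex, hey]) <;> push_cast <;> linarith
    have hbd : b + d = n := by
      by_contra h2
      have hex : (ex:ℝ) + es = n := by exact_mod_cast hgapR (lt_of_le_of_ne hbd_le h2)
      have hbxr : (bx:ℝ) ≤ n - 1 := by linarith
      refine hover _ hE _ hBR heBR ((n:ℝ) - 1/2, (1:ℝ)/2)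
        (mem_openSq_mk ?_ ?_ ?_ ?_) (mem_openSq_mk ?_ ?_ ?_ ?_) <;>
        (try simp only [hey]) <;> push_cast <;> linarith
    omega
  have hcd : c + d = n := by
    by_contra h0
    have h1 : c + d < n := lt_of_le_of_ne hcd_le h0
    have hey : (ey:ℝ) + es = n := by exact_mod_cast hgapT h1
    have heyr : (ey:ℝ) ≤ n - 1 := by linarith
    have hac : a + c = n := by
      by_contra h2
      have hex : ex = 0 := hgapL (lt_of_le_of_ne hac_le h2)
      have htyr : (ty:ℝ) ≤ n - 1 := by linarith
      refine hover _ hE _ hTL heTL ((1:ℝ)/2, (n:ℝ) - 1/2)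
        (mem_openSq_mk ?_ ?_ ?_ ?_) (mem_openSq_mk ?_ ?_ ?_ ?_) <;>
        (try simp only [hex]) <;> push_cast <;> linarith
    have hbd : b + d = n := by
      by_contra h2
      have hex : (ex:ℝ) + es = n := by exact_mod_cast hgapR (lt_of_le_of_ne hbd_le h2)
      have hexr : (ex:ℝ) ≤ n - 1 := by linarith
      have htxr : (tx:ℝ) ≤ n - 1 := by linarith
      have hty2r : (ty2:ℝ) ≤ n - 1 := by linarith
      refine hover _ hE _ hTR heTR ((n:ℝ) - 1/2, (n:ℝ) - 1/2)
        (mem_openSq_mk ?_ ?_ ?_ ?_) (mem_openSq_mk ?_ ?_ ?_ ?_) <;>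
        push_cast <;> linarith
    omega
  have hac : a + c = n := by
    by_contra h0
    have h1 : a + c < n := lt_of_le_of_ne hac_le h0
    have hex : ex = 0 := hgapL h1
    have hbd : b + d = n := by
      by_contra h2
      have := hgapR (lt_of_le_of_ne hbd_le h2)
      omega
    omega
  have hbd : b + d = n := by omega
  -- now c = b, d = a; finish by trichotomy
  have hcb : b = c := by omega
  have hda : a = d := by omega
  subst hcb hda
  have hbxa : a = bx := by omega
  have htya : a = ty := by omega
  have htxb : b = tx := by omega
  have hty2b : b = ty2 := by omega
  subst hbxa htya htxb hty2b
  rcases Nat.lt_trichotomy a b with h1 | h1 | h1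
  · -- a < b : BR and TL overlap
    have r1 : (a:ℝ) < b := by exact_mod_cast h1
    refine hover _ hBR _ hTL neBRTL (((a:ℝ) + b)/2, ((a:ℝ) + b)/2)
      (mem_openSq_mk ?_ ?_ ?_ ?_) (mem_openSq_mk ?_ ?_ ?_ ?_) <;> push_cast <;> linarith
  · -- a = b : the four corners tile the square; the fifth square overlaps one of them
    subst h1
    have rex : (ex:ℝ) + es ≤ n := by exact_mod_cast hbe.1
    have rey : (ey:ℝ) + es ≤ n := by exact_mod_cast hbe.2
    have rn : (a:ℝ) + a = n := by exact_mod_cast hab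
    rcases Nat.lt_or_ge ex a with h2 | h2 <;> rcases Nat.lt_or_ge ey a with h3 | h3
    · have r2 : (ex:ℝ) + 1 ≤ a := by exact_mod_cast h2
      have r3 : (ey:ℝ) + 1 ≤ a := by exact_mod_cast h3
      refine hover _ hE _ hBL heBL ((ex:ℝ) + 1/2, (ey:ℝ) + 1/2)
        (mem_openSq_mk ?_ ?_ ?_ ?_) (mem_openSq_mk ?_ ?_ ?_ ?_) <;> push_cast <;>
        linarith [nn ex, nn ey]
    · have r2 : (ex:ℝ) + 1 ≤ a := by exact_mod_cast h2
      have r3 : (a:ℝ) ≤ ey := by exact_mod_cast h3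
      refine hover _ hE _ hTL heTL ((ex:ℝ) + 1/2, (ey:ℝ) + 1/2)
        (mem_openSq_mk ?_ ?_ ?_ ?_) (mem_openSq_mk ?_ ?_ ?_ ?_) <;> push_cast <;>
        linarith [nn ex, nn ey]
    · have r2 : (a:ℝ) ≤ ex := by exact_mod_cast h2
      have r3 : (ey:ℝ) + 1 ≤ a := by exact_mod_cast h3
      refine hover _ hE _ hBR heBR ((ex:ℝ) + 1/2, (ey:ℝ) + 1/2)
        (mem_openSq_mk ?_ ?_ ?_ ?_) (mem_openSq_mk ?_ ?_ ?_ ?_) <;> push_cast <;>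
        linarith [nn ex, nn ey]
    · have r2 : (a:ℝ) ≤ ex := by exact_mod_cast h2
      have r3 : (a:ℝ) ≤ ey := by exact_mod_cast h3
      refine hover _ hE _ hTR heTR ((ex:ℝ) + 1/2, (ey:ℝ) + 1/2)
        (mem_openSq_mk ?_ ?_ ?_ ?_) (mem_openSq_mk ?_ ?_ ?_ ?_) <;> push_cast <;>
        linarith [nn ex, nn ey]
  · -- b < a : BL and TR overlap
    have r1 : (b:ℝ) < a := by exact_mod_cast h1
    refine hover _ hBL _ hTR neBLTR (((a:ℝ) + b)/2, ((a:ℝ) + b)/2)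
      (mem_openSq_mk ?_ ?_ ?_ ?_) (mem_openSq_mk ?_ ?_ ?_ ?_) <;> push_cast <;> linarith
end

section
/- If the n×n square has a dissection into exactly 4 integer-sided squares, then n is even and all four squares have side length n/2. Consequently, the only prime dissection of order 4 of any n×n square is the dissection of the 2×2 square into four unit squares. -/
lemma mem_closedSq' {q : ℕ × ℕ × ℕ} {p : ℝ × ℝ} :
    p ∈ closedSq q ↔ ((q.1:ℝ) ≤ p.1 ∧ p.1 ≤ q.1 + q.2.2) ∧
      ((q.2.1:ℝ) ≤ p.2 ∧ p.2 ≤ q.2.1 + q.2.2) := by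
  simp only [closedSq, Set.mem_prod, Set.mem_Icc]

lemma mem_openSq' {q : ℕ × ℕ × ℕ} {p : ℝ × ℝ} :
    p ∈ openSq q ↔ ((q.1:ℝ) < p.1 ∧ p.1 < q.1 + q.2.2) ∧
      ((q.2.1:ℝ) < p.2 ∧ p.2 < q.2.1 + q.2.2) := by
  simp only [openSq, Set.mem_prod, Set.mem_Ioo]

set_option maxHeartbeats 2000000 in
lemma dissection_four {n : ℕ} {D : Finset (ℕ × ℕ × ℕ)} (h : IsDissection n D)
    (h4 : D.card = 4) :
    ∃ a : ℕ, 0 < a ∧ n = 2 * a ∧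
      D = {(0,0,a), (a,0,a), (0,a,a), (a,a,a)} := by
  obtain ⟨hpos, hcover, hdisj⟩ := h
  have hsub : ∀ q ∈ D, closedSq q ⊆ Set.Icc (0:ℝ) n ×ˢ Set.Icc (0:ℝ) n := by
    intro q hq
    rw [← hcover]
    exact Set.subset_biUnion_of_mem hq
  have bound : ∀ q ∈ D, (q.1 : ℝ) + q.2.2 ≤ n ∧ (q.2.1 : ℝ) + q.2.2 ≤ n := by
    intro q hq
    have h1 := hsub q hq (show ((q.1:ℝ) + q.2.2, (q.2.1:ℝ) + q.2.2) ∈ closedSq q by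
      rw [mem_closedSq']
      have : (0:ℝ) ≤ q.2.2 := by positivity
      dsimp only
      constructor <;> constructor <;> linarith)
    simp only [Set.mem_prod, Set.mem_Icc] at h1
    exact ⟨h1.1.2, h1.2.2⟩
  -- n is at least 1
  have hDne : D.Nonempty := by rw [← Finset.card_pos, h4]; norm_num
  have hn1 : (1:ℝ) ≤ n := by
    obtain ⟨q, hq⟩ := hDne
    have hb := (bound q hq).1
    have hs : 1 ≤ q.2.2 := hpos q hq
    have hs' : (1:ℝ) ≤ q.2.2 := by exact_mod_cast hs
    have : (0:ℝ) ≤ q.1 := Nat.cast_nonneg _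
    linarith
  -- every side is strictly less than n
  have side_lt : ∀ q ∈ D, (q.2.2 : ℝ) < n := by
    intro q hq
    by_contra hle
    push_neg at hle
    obtain ⟨q', hq', hne⟩ := Finset.exists_mem_ne (s := D) (by omega) q
    have hd := hdisj q' hq' q hq hne
    have hb := bound q hq
    have hb' := bound q' hq'
    have hs' : (1:ℝ) ≤ q'.2.2 := by exact_mod_cast hpos q' hq'
    have hx0 : (0:ℝ) ≤ q'.1 := Nat.cast_nonneg _
    have hy0 : (0:ℝ) ≤ q'.2.1 := Nat.cast_nonneg _
    have hqx : (0:ℝ) ≤ q.1 := Nat.cast_nonneg _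
    have hqy : (0:ℝ) ≤ q.2.1 := Nat.cast_nonneg _
    have hm : ((q'.1:ℝ) + q'.2.2/2, (q'.2.1:ℝ) + q'.2.2/2) ∈ openSq q' ∩ openSq q := by
      constructor <;> rw [mem_openSq'] <;> constructor <;> constructor <;> dsimp only <;> linarith
    rw [hd] at hm
    exact hm
  have hbig : ∀ p : ℝ × ℝ, p ∈ Set.Icc (0:ℝ) n ×ˢ Set.Icc (0:ℝ) n →
      ∃ q ∈ D, p ∈ closedSq q := by
    intro p hp
    rw [← hcover] at hp
    simpa using hp
  -- the four corner squares
  obtain ⟨⟨ax, ay, a⟩, hA, hAm⟩ := hbig (0,0) (by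
    simp only [Set.mem_prod, Set.mem_Icc]; norm_num)
  obtain ⟨⟨bx, by', b⟩, hB, hBm⟩ := hbig ((n:ℝ),0) (by
    simp only [Set.mem_prod, Set.mem_Icc]; norm_num)
  obtain ⟨⟨cx, cy, c⟩, hC, hCm⟩ := hbig (0,(n:ℝ)) (by
    simp only [Set.mem_prod, Set.mem_Icc]; norm_num)
  obtain ⟨⟨dx, dy, d⟩, hD, hDm⟩ := hbig ((n:ℝ),(n:ℝ)) (by
    simp only [Set.mem_prod, Set.mem_Icc]; norm_num)
  rw [mem_closedSq'] at hAm hBm hCm hDm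
  dsimp only at hAm hBm hCm hDm
  have hboundA := bound _ hA; have hboundB := bound _ hB
  have hboundC := bound _ hC; have hboundD := bound _ hD
  dsimp only at hboundA hboundB hboundC hboundD
  have hax : (ax:ℝ) = 0 := le_antisymm hAm.1.1 (Nat.cast_nonneg _)
  have hay : (ay:ℝ) = 0 := le_antisymm hAm.2.1 (Nat.cast_nonneg _)
  have hby : (by':ℝ) = 0 := le_antisymm hBm.2.1 (Nat.cast_nonneg _)
  have hcx : (cx:ℝ) = 0 := le_antisymm hCm.1.1 (Nat.cast_nonneg _)
  have hbx : (bx:ℝ) + b = n := le_antisymm hboundB.1 hBm.1.2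
  have hcy : (cy:ℝ) + c = n := le_antisymm hboundC.2 hCm.2.2
  have hdx : (dx:ℝ) + d = n := le_antisymm hboundD.1 hDm.1.2
  have hdy : (dy:ℝ) + d = n := le_antisymm hboundD.2 hDm.2.2
  have ha1 : (1:ℝ) ≤ a := by exact_mod_cast hpos _ hA
  have hb1 : (1:ℝ) ≤ b := by exact_mod_cast hpos _ hB
  have hc1 : (1:ℝ) ≤ c := by exact_mod_cast hpos _ hC
  have hd1 : (1:ℝ) ≤ d := by exact_mod_cast hpos _ hD
  have haltn : (a:ℝ) < n := side_lt _ hA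
  have hbltn : (b:ℝ) < n := side_lt _ hB
  have hcltn : (c:ℝ) < n := side_lt _ hC
  have hdltn : (d:ℝ) < n := side_lt _ hD
  -- pairwise distinct
  have neAB : (ax, ay, a) ≠ (bx, by', b) := by
    rintro ⟨⟩
    -- now bx = ax, b = a
    have : (n:ℝ) ≤ a := by rw [← hbx] at haltn ⊢; linarith [hAm.1.1]
    linarith
  have neAC : (ax, ay, a) ≠ (cx, cy, c) := by rintro ⟨⟩; linarith
  have neAD : (ax, ay, a) ≠ (dx, dy, d) := by rintro ⟨⟩; linarith
  have neBC : (bx, by', b) ≠ (cx, cy, c) := by rintro ⟨⟩; linarith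
  have neBD : (bx, by', b) ≠ (dx, dy, d) := by rintro ⟨⟩; linarith
  have neCD : (cx, cy, c) ≠ (dx, dy, d) := by rintro ⟨⟩; linarith
  have hsub2 : ({(ax,ay,a),(bx,by',b),(cx,cy,c),(dx,dy,d)} : Finset (ℕ×ℕ×ℕ)) ⊆ D := by
    simp only [Finset.insert_subset_iff, Finset.singleton_subset_iff]
    exact ⟨hA, hB, hC, hD⟩
  have hDeq : D = {(ax,ay,a),(bx,by',b),(cx,cy,c),(dx,dy,d)} := by
    refine (Finset.eq_of_subset_of_card_le hsub2 ?_).symm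
    rw [h4,
        Finset.card_insert_of_notMem (by simp [neAB, neAC, neAD]),
        Finset.card_insert_of_notMem (by simp [neBC, neBD]),
        Finset.card_insert_of_notMem (by simp [neCD]),
        Finset.card_singleton]
  have hmemD : ∀ q ∈ D, q = (ax,ay,a) ∨ q = (bx,by',b) ∨ q = (cx,cy,c) ∨ q = (dx,dy,d) := by
    intro q hq; rw [hDeq] at hq; simpa using hq
  -- bottom edge: n ≤ a + b
  have hab : (n:ℝ) ≤ a + b := by
    by_contra hlt
    push_neg at hlt
    have h0a : (0:ℝ) ≤ a := by positivity
    obtain ⟨q, hq, hqm⟩ := hbig (((a:ℝ) + ((n:ℝ) - b))/2, 0) (by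
      simp only [Set.mem_prod, Set.mem_Icc]
      refine ⟨⟨by linarith, by linarith⟩, by linarith, by linarith⟩)
    rw [mem_closedSq'] at hqm
    rcases hmemD q hq with rfl | rfl | rfl | rfl <;> dsimp only at hqm <;>
      linarith [hqm.1.1, hqm.1.2, hqm.2.1, hqm.2.2]
  -- left edge: n ≤ a + c
  have hac : (n:ℝ) ≤ a + c := by
    by_contra hlt
    push_neg at hlt
    have h0a : (0:ℝ) ≤ a := by positivity
    obtain ⟨q, hq, hqm⟩ := hbig (0, ((a:ℝ) + ((n:ℝ) - c))/2) (by
      simp only [Set.mem_prod, Set.mem_Icc]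
      refine ⟨⟨by linarith, by linarith⟩, by linarith, by linarith⟩)
    rw [mem_closedSq'] at hqm
    rcases hmemD q hq with rfl | rfl | rfl | rfl <;> dsimp only at hqm <;>
      linarith [hqm.1.1, hqm.1.2, hqm.2.1, hqm.2.2]
  -- right edge: n ≤ b + d
  have hbd : (n:ℝ) ≤ b + d := by
    by_contra hlt
    push_neg at hlt
    have h0b : (0:ℝ) ≤ b := by positivity
    obtain ⟨q, hq, hqm⟩ := hbig ((n:ℝ), ((b:ℝ) + ((n:ℝ) - d))/2) (by
      simp only [Set.mem_prod, Set.mem_Icc]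
      refine ⟨⟨by linarith, by linarith⟩, by linarith, by linarith⟩)
    rw [mem_closedSq'] at hqm
    rcases hmemD q hq with rfl | rfl | rfl | rfl <;> dsimp only at hqm <;>
      linarith [hqm.1.1, hqm.1.2, hqm.2.1, hqm.2.2]
  -- top edge: n ≤ c + d
  have hcd : (n:ℝ) ≤ c + d := by
    by_contra hlt
    push_neg at hlt
    have h0c : (0:ℝ) ≤ c := by positivity
    obtain ⟨q, hq, hqm⟩ := hbig (((c:ℝ) + ((n:ℝ) - d))/2, (n:ℝ)) (by
      simp only [Set.mem_prod, Set.mem_Icc]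
      refine ⟨⟨by linarith, by linarith⟩, by linarith, by linarith⟩)
    rw [mem_closedSq'] at hqm
    rcases hmemD q hq with rfl | rfl | rfl | rfl <;> dsimp only at hqm <;>
      linarith [hqm.1.1, hqm.1.2, hqm.2.1, hqm.2.2]
  -- disjointness gives the reverse inequalities
  have hab2 : (a:ℝ) + b ≤ n := by
    by_contra hlt; push_neg at hlt
    have hd' := hdisj _ hA _ hB neAB
    have hm : (((((n:ℝ) - b) + a)/2 : ℝ), (1/2 : ℝ)) ∈ openSq (ax,ay,a) ∩ openSq (bx,by',b) := by
      constructor <;> rw [mem_openSq'] <;> dsimp only <;>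
        refine ⟨⟨by linarith, by linarith⟩, by linarith, by linarith⟩
    rw [hd'] at hm; exact hm
  have hac2 : (a:ℝ) + c ≤ n := by
    by_contra hlt; push_neg at hlt
    have hd' := hdisj _ hA _ hC neAC
    have hm : ((1/2 : ℝ), ((((n:ℝ) - c) + a)/2 : ℝ)) ∈ openSq (ax,ay,a) ∩ openSq (cx,cy,c) := by
      constructor <;> rw [mem_openSq'] <;> dsimp only <;>
        refine ⟨⟨by linarith, by linarith⟩, by linarith, by linarith⟩
    rw [hd'] at hm; exact hm
  have hbd2 : (b:ℝ) + d ≤ n := by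
    by_contra hlt; push_neg at hlt
    have hd' := hdisj _ hB _ hD neBD
    have hm : (((n:ℝ) - 1/2 : ℝ), ((((n:ℝ) - d) + b)/2 : ℝ)) ∈ openSq (bx,by',b) ∩ openSq (dx,dy,d) := by
      constructor <;> rw [mem_openSq'] <;> dsimp only <;>
        refine ⟨⟨by linarith, by linarith⟩, by linarith, by linarith⟩
    rw [hd'] at hm; exact hm
  have hcd2 : (c:ℝ) + d ≤ n := by
    by_contra hlt; push_neg at hlt
    have hd' := hdisj _ hC _ hD neCD
    have hm : (((((n:ℝ) - d) + c)/2 : ℝ), ((n:ℝ) - 1/2 : ℝ)) ∈ openSq (cx,cy,c) ∩ openSq (dx,dy,d) := by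
      constructor <;> rw [mem_openSq'] <;> dsimp only <;>
        refine ⟨⟨by linarith, by linarith⟩, by linarith, by linarith⟩
    rw [hd'] at hm; exact hm
  have eab : (a:ℝ) + b = n := le_antisymm hab2 hab
  have eac : (a:ℝ) + c = n := le_antisymm hac2 hac
  have ebd : (b:ℝ) + d = n := le_antisymm hbd2 hbd
  -- a ≤ b, via A and D
  have haleb : (a:ℝ) ≤ b := by
    by_contra hlt; push_neg at hlt
    have hd' := hdisj _ hA _ hD neAD
    have hm : ((((b:ℝ)+a)/2 : ℝ), (((b:ℝ)+a)/2 : ℝ)) ∈ openSq (ax,ay,a) ∩ openSq (dx,dy,d) := by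
      constructor <;> rw [mem_openSq'] <;> dsimp only <;>
        refine ⟨⟨by linarith, by linarith⟩, by linarith, by linarith⟩
    rw [hd'] at hm; exact hm
  -- b ≤ a, via B and C
  have hblea : (b:ℝ) ≤ a := by
    by_contra hlt; push_neg at hlt
    have hd' := hdisj _ hB _ hC neBC
    have hm : ((((a:ℝ)+b)/2 : ℝ), (((a:ℝ)+b)/2 : ℝ)) ∈ openSq (bx,by',b) ∩ openSq (cx,cy,c) := by
      constructor <;> rw [mem_openSq'] <;> dsimp only <;>
        refine ⟨⟨by linarith, by linarith⟩, by linarith, by linarith⟩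
    rw [hd'] at hm; exact hm
  have eba : (b:ℝ) = a := le_antisymm hblea haleb
  have ean : (n:ℝ) = 2*a := by linarith
  have hb' : b = a := by exact_mod_cast eba
  have hc' : c = a := by
    have : (c:ℝ) = a := by linarith
    exact_mod_cast this
  have hd'' : d = a := by
    have : (d:ℝ) = a := by linarith
    exact_mod_cast this
  have hax' : ax = 0 := by exact_mod_cast hax
  have hay' : ay = 0 := by exact_mod_cast hay
  have hby'' : by' = 0 := by exact_mod_cast hby
  have hcx' : cx = 0 := by exact_mod_cast hcx
  have hbx' : bx = a := by
    have : (bx:ℝ) = a := by linarith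
    exact_mod_cast this
  have hcy' : cy = a := by
    have : (cy:ℝ) = a := by linarith
    exact_mod_cast this
  have hdx' : dx = a := by
    have : (dx:ℝ) = a := by linarith
    exact_mod_cast this
  have hdy' : dy = a := by
    have : (dy:ℝ) = a := by linarith
    exact_mod_cast this
  refine ⟨a, hpos _ hA, by exact_mod_cast ean, ?_⟩
  rw [hDeq, hax', hay', hb', hbx', hby'', hc', hcx', hcy', hd'', hdx', hdy']

theorem order_four_dissections :
    (∀ (n : ℕ) (D : Finset (ℕ × ℕ × ℕ)), IsDissection n D → D.card = 4 →
      2 ∣ n ∧ ∀ q ∈ D, q.2.2 = n / 2) ∧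
    (∀ (n : ℕ) (D : Finset (ℕ × ℕ × ℕ)), IsPrimeDissection n D → D.card = 4 →
      n = 2 ∧ D = {(0, 0, 1), (0, 1, 1), (1, 0, 1), (1, 1, 1)}) := by
  constructor
  · intro n D hD h4
    obtain ⟨a, hapos, hna, hDeq⟩ := dissection_four hD h4
    refine ⟨⟨a, hna⟩, ?_⟩
    intro q hq
    rw [hDeq] at hq
    simp only [Finset.mem_insert, Finset.mem_singleton] at hq
    rcases hq with rfl | rfl | rfl | rfl <;> simp <;> omega
  · intro n D hPD h4
    obtain ⟨hD, hgcd⟩ := hPD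
    obtain ⟨a, hapos, hna, hDeq⟩ := dissection_four hD h4
    have hdv : a ∣ D.gcd (fun q => q.2.2) := by
      apply Finset.dvd_gcd
      intro q hq
      rw [hDeq] at hq
      simp only [Finset.mem_insert, Finset.mem_singleton] at hq
      rcases hq with rfl | rfl | rfl | rfl <;> simp
    rw [hgcd] at hdv
    have ha1 : a = 1 := Nat.dvd_one.mp hdv
    subst ha1
    refine ⟨by omega, ?_⟩
    rw [hDeq]
    decide
end

section
/- Every prime dissection of order 6 of an n×n square has n = 3 and consists of one square of side 2 and five squares of side 1. In particular, f(3) = 6. -/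
def Owns (q : ℕ × ℕ × ℕ) (i j : ℕ) : Prop :=
  q.1 ≤ i ∧ i < q.1 + q.2.2 ∧ q.2.1 ≤ j ∧ j < q.2.1 + q.2.2

instance : DecidablePred fun p : (ℕ×ℕ×ℕ) × ℕ × ℕ => Owns p.1 p.2.1 p.2.2 := by
  intro p; unfold Owns; infer_instance

def Core (n : ℕ) (D : Finset (ℕ × ℕ × ℕ)) : Prop :=
  (∀ q ∈ D, 0 < q.2.2 ∧ q.1 + q.2.2 ≤ n ∧ q.2.1 + q.2.2 ≤ n) ∧
  (∀ i j, i < n → j < n → ∃! q, q ∈ D ∧ Owns q i j)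

lemma owns_unique {n : ℕ} {D : Finset (ℕ × ℕ × ℕ)} (hC : Core n D)
    {q q' : ℕ × ℕ × ℕ} (hq : q ∈ D) (hq' : q' ∈ D) {i j : ℕ}
    (hi : i < n) (hj : j < n) (h1 : Owns q i j) (h2 : Owns q' i j) : q = q' := by
  obtain ⟨u, _, hu⟩ := hC.2 i j hi hj
  rw [hu q ⟨hq, h1⟩, hu q' ⟨hq', h2⟩]

lemma exists_owner {n : ℕ} {D : Finset (ℕ × ℕ × ℕ)} (hC : Core n D)
    {i j : ℕ} (hi : i < n) (hj : j < n) : ∃ q ∈ D, Owns q i j := by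
  obtain ⟨u, ⟨hu1, hu2⟩, _⟩ := hC.2 i j hi hj
  exact ⟨u, hu1, hu2⟩

/-- Bridge from the real-plane dissection to the combinatorial core. -/
lemma core_of_isDissection {n : ℕ} {D : Finset (ℕ × ℕ × ℕ)}
    (h : IsDissection n D) : Core n D := by
  obtain ⟨hpos, hcover, hdisj⟩ := h
  have hsub : ∀ q ∈ D, closedSq q ⊆ Set.Icc (0:ℝ) n ×ˢ Set.Icc (0:ℝ) n := by
    intro q hq
    rw [← hcover]
    exact Set.subset_biUnion_of_mem hq
  constructor
  · intro q hq
    refine ⟨hpos q hq, ?_, ?_⟩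
    · have hmem : ((q.1 + q.2.2 : ℝ), (q.2.1 : ℝ)) ∈ closedSq q := by
        have h0 : (0:ℝ) ≤ (q.2.2 : ℝ) := Nat.cast_nonneg _
        simp only [closedSq, Set.mem_prod, Set.mem_Icc]
        refine ⟨⟨by linarith, le_rfl⟩, le_rfl, by linarith⟩
      have h1 : ((q.1 : ℝ) + q.2.2) ≤ n := (hsub q hq hmem).1.2
      exact_mod_cast h1
    · have hmem : ((q.1 : ℝ), (q.2.1 + q.2.2 : ℝ)) ∈ closedSq q := by
        have h0 : (0:ℝ) ≤ (q.2.2 : ℝ) := Nat.cast_nonneg _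
        simp only [closedSq, Set.mem_prod, Set.mem_Icc]
        refine ⟨⟨le_rfl, by linarith⟩, by linarith, le_rfl⟩
      have h1 : ((q.2.1 : ℝ) + q.2.2) ≤ n := (hsub q hq hmem).2.2
      exact_mod_cast h1
  · intro i j hi hj
    have hp : ((i + 2⁻¹ : ℝ), (j + 2⁻¹ : ℝ)) ∈ Set.Icc (0:ℝ) n ×ˢ Set.Icc (0:ℝ) n := by
      constructor
      · constructor
        · positivity
        · have : (i:ℝ) + 1 ≤ n := by exact_mod_cast hi
          linarith
      · constructor
        · positivity
        · have : (j:ℝ) + 1 ≤ n := by exact_mod_cast hj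
          linarith
    rw [← hcover] at hp
    simp only [Set.mem_iUnion] at hp
    obtain ⟨q, hq, hpq⟩ := hp
    have howns : ∀ q' ∈ D, ((i + 2⁻¹ : ℝ), (j + 2⁻¹ : ℝ)) ∈ closedSq q' → Owns q' i j := by
      intro q' hq' hmem
      obtain ⟨⟨a1, a2⟩, ⟨b1, b2⟩⟩ := hmem
      refine ⟨?_, ?_, ?_, ?_⟩
      · have : (q'.1 : ℝ) < i + 1 := by linarith
        exact_mod_cast Nat.lt_succ_iff.mp (by exact_mod_cast this)
      · have : (i : ℝ) < q'.1 + q'.2.2 := by linarith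
        exact_mod_cast this
      · have : (q'.2.1 : ℝ) < j + 1 := by linarith
        exact_mod_cast Nat.lt_succ_iff.mp (by exact_mod_cast this)
      · have : (j : ℝ) < q'.2.1 + q'.2.2 := by linarith
        exact_mod_cast this
    have hopen : ∀ q' : ℕ × ℕ × ℕ, Owns q' i j →
        ((i + 2⁻¹ : ℝ), (j + 2⁻¹ : ℝ)) ∈ openSq q' := by
      intro q' ⟨o1, o2, o3, o4⟩
      constructor
      · constructor
        · have h1 : (q'.1 : ℝ) ≤ i := by exact_mod_cast o1
          linarith
        · have h2 : (i : ℝ) + 1 ≤ q'.1 + q'.2.2 := by exact_mod_cast o2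
          linarith
      · constructor
        · have h1 : (q'.2.1 : ℝ) ≤ j := by exact_mod_cast o3
          linarith
        · have h2 : (j : ℝ) + 1 ≤ q'.2.1 + q'.2.2 := by exact_mod_cast o4
          linarith
    refine ⟨q, ⟨hq, howns q hq hpq⟩, ?_⟩
    rintro q' ⟨hq', ho'⟩
    by_contra hne
    have := hdisj q' hq' q hq hne
    have : ((i + 2⁻¹ : ℝ), (j + 2⁻¹ : ℝ)) ∈ openSq q' ∩ openSq q :=
      ⟨hopen q' ho', hopen q (howns q hq hpq)⟩
    rw [hdisj q' hq' q hq hne] at this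
    exact this

lemma area_core {n : ℕ} {D : Finset (ℕ × ℕ × ℕ)} (hC : Core n D) :
    ∑ q ∈ D, q.2.2 * q.2.2 = n * n := by
  classical
  set F : ℕ × ℕ → ℕ × ℕ × ℕ := fun p =>
    if h : p.1 < n ∧ p.2 < n then (hC.2 p.1 p.2 h.1 h.2).choose else default with hF
  have hFmem : ∀ p ∈ Finset.range n ×ˢ Finset.range n, F p ∈ D := by
    rintro ⟨i, j⟩ hp
    rw [Finset.mem_product, Finset.mem_range, Finset.mem_range] at hp
    simp only [hF, dif_pos hp]
    exact ((hC.2 i j hp.1 hp.2).choose_spec).1.1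
  have hcard := Finset.card_eq_sum_card_fiberwise hFmem
  rw [Finset.card_product, Finset.card_range] at hcard
  rw [hcard]
  apply Finset.sum_congr rfl
  intro q hq
  symm
  have hfib : (Finset.range n ×ˢ Finset.range n).filter (fun p => F p = q)
      = Finset.Ico q.1 (q.1 + q.2.2) ×ˢ Finset.Ico q.2.1 (q.2.1 + q.2.2) := by
    ext ⟨i, j⟩
    simp only [Finset.mem_filter, Finset.mem_product, Finset.mem_range, Finset.mem_Ico]
    constructor
    · rintro ⟨⟨hi, hj⟩, hfq⟩
      simp only [hF, dif_pos (⟨hi, hj⟩ : i < n ∧ j < n)] at hfq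
      have := ((hC.2 i j hi hj).choose_spec).1.2
      rw [hfq] at this
      exact ⟨⟨this.1, this.2.1⟩, this.2.2.1, this.2.2.2⟩
    · rintro ⟨⟨hx1, hx2⟩, hy1, hy2⟩
      obtain ⟨hpos, hxb, hyb⟩ := hC.1 q hq
      have hi : i < n := lt_of_lt_of_le hx2 hxb
      have hj : j < n := lt_of_lt_of_le hy2 hyb
      refine ⟨⟨hi, hj⟩, ?_⟩
      simp only [hF, dif_pos (⟨hi, hj⟩ : i < n ∧ j < n)]
      have hspec := (hC.2 i j hi hj).choose_spec
      exact (hC.2 i j hi hj).unique hspec.1 ⟨hq, hx1, hx2, hy1, hy2⟩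
  rw [hfib, Finset.card_product, Nat.card_Ico, Nat.card_Ico]
  simp

lemma side_lt {n : ℕ} {D : Finset (ℕ × ℕ × ℕ)} (hC : Core n D)
    {e f : ℕ × ℕ × ℕ} (he : e ∈ D) (hf : f ∈ D) (hef : e ≠ f) :
    ∀ q ∈ D, q.2.2 < n := by
  intro q hq
  obtain ⟨hqpos, hqx, hqy⟩ := hC.1 q hq
  rcases lt_or_eq_of_le (le_trans (Nat.le_add_left _ _) hqx) with h | h
  · exact h
  · exfalso
    have hx0 : q.1 = 0 := by omega
    have hy0 : q.2.1 = 0 := by omega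
    have hall : ∀ r ∈ D, r = q := by
      intro r hr
      obtain ⟨hrpos, hrx, hry⟩ := hC.1 r hr
      have hown_r : Owns r r.1 r.2.1 := ⟨le_rfl, by omega, le_rfl, by omega⟩
      have hown_q : Owns q r.1 r.2.1 := by
        constructor <;> [omega; constructor] <;> [skip; constructor] <;> omega
      exact owns_unique hC hr hq (by omega) (by omega) hown_r hown_q
    exact hef ((hall e he).trans (hall f hf).symm)

def Cornered (n : ℕ) (q : ℕ × ℕ × ℕ) : Prop :=
  (q.1 = 0 ∧ q.2.1 = 0) ∨ (q.1 + q.2.2 = n ∧ q.2.1 = 0) ∨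
  (q.1 = 0 ∧ q.2.1 + q.2.2 = n) ∨ (q.1 + q.2.2 = n ∧ q.2.1 + q.2.2 = n)

def Bonly (n : ℕ) (q : ℕ × ℕ × ℕ) : Prop := q.2.1 = 0 ∧ q.1 ≠ 0 ∧ q.1 + q.2.2 ≠ n
def Tonly (n : ℕ) (q : ℕ × ℕ × ℕ) : Prop := q.2.1 + q.2.2 = n ∧ q.1 ≠ 0 ∧ q.1 + q.2.2 ≠ n
def Lonly (n : ℕ) (q : ℕ × ℕ × ℕ) : Prop := q.1 = 0 ∧ q.2.1 ≠ 0 ∧ q.2.1 + q.2.2 ≠ n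
def Ronly (n : ℕ) (q : ℕ × ℕ × ℕ) : Prop := q.1 + q.2.2 = n ∧ q.2.1 ≠ 0 ∧ q.2.1 + q.2.2 ≠ n
def Inside (n : ℕ) (q : ℕ × ℕ × ℕ) : Prop :=
  q.1 ≠ 0 ∧ q.1 + q.2.2 ≠ n ∧ q.2.1 ≠ 0 ∧ q.2.1 + q.2.2 ≠ n

def Setup (n : ℕ) (D : Finset (ℕ × ℕ × ℕ)) (e f : ℕ × ℕ × ℕ) : Prop :=
  Core n D ∧ e ∈ D ∧ f ∈ D ∧ e ≠ f ∧
  (∀ q ∈ D, q = e ∨ q = f ∨ Cornered n q)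

lemma setup_swap {n : ℕ} {D : Finset (ℕ × ℕ × ℕ)} {e f : ℕ × ℕ × ℕ}
    (h : Setup n D e f) : Setup n D f e := by
  obtain ⟨h1, h2, h3, h4, h5⟩ := h
  exact ⟨h1, h3, h2, h4.symm, fun q hq => by rcases h5 q hq with h | h | h <;> tauto⟩

/-- The four corner squares. -/
lemma corners {n : ℕ} {D : Finset (ℕ × ℕ × ℕ)} (hC : Core n D)
    {e f : ℕ × ℕ × ℕ} (he : e ∈ D) (hf : f ∈ D) (hef : e ≠ f) (hn : 0 < n) :
    ∃ a b c d : ℕ, (0,0,a) ∈ D ∧ (n-b,0,b) ∈ D ∧ (0,n-c,c) ∈ D ∧ (n-d,n-d,d) ∈ D ∧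
      0 < a ∧ a < n ∧ 0 < b ∧ b < n ∧ 0 < c ∧ c < n ∧ 0 < d ∧ d < n := by
  obtain ⟨qa, hqa, ha⟩ := exists_owner hC hn hn
  obtain ⟨qb, hqb, hb⟩ := exists_owner hC (Nat.sub_lt hn one_pos) hn
  obtain ⟨qc, hqc, hc⟩ := exists_owner hC hn (Nat.sub_lt hn one_pos)
  obtain ⟨qd, hqd, hd⟩ := exists_owner hC (Nat.sub_lt hn one_pos) (Nat.sub_lt hn one_pos)
  obtain ⟨ha1, ha2, ha3⟩ := hC.1 qa hqa
  obtain ⟨hb1, hb2, hb3⟩ := hC.1 qb hqb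
  obtain ⟨hc1, hc2, hc3⟩ := hC.1 qc hqc
  obtain ⟨hd1, hd2, hd3⟩ := hC.1 qd hqd
  obtain ⟨ax, ay, as⟩ := qa
  obtain ⟨bx, by', bs⟩ := qb
  obtain ⟨cx, cy, cs⟩ := qc
  obtain ⟨dx, dy, ds⟩ := qd
  unfold Owns at ha hb hc hd
  simp only at *
  refine ⟨as, bs, cs, ds, ?_, ?_, ?_, ?_, ?_, ?_, ?_, ?_, ?_, ?_, ?_, ?_⟩
  · have h1 : ax = 0 := by omega
    have h2 : ay = 0 := by omega
    rw [h1, h2] at hqa; exact hqa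
  · have h1 : bx = n - bs := by omega
    have h2 : by' = 0 := by omega
    rw [h1, h2] at hqb; exact hqb
  · have h1 : cx = 0 := by omega
    have h2 : cy = n - cs := by omega
    rw [h1, h2] at hqc; exact hqc
  · have h1 : dx = n - ds := by omega
    have h2 : dy = n - ds := by omega
    rw [h1, h2] at hqd; exact hqd
  · omega
  · exact side_lt hC he hf hef _ hqa
  · omega
  · exact side_lt hC he hf hef _ hqb
  · omega
  · exact side_lt hC he hf hef _ hqc
  · omega
  · exact side_lt hC he hf hef _ hqd

def sh (n : ℕ) (q : ℕ × ℕ × ℕ) : ℕ × ℕ × ℕ := (n - (q.1 + q.2.2), q.2.1, q.2.2)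
def sv (n : ℕ) (q : ℕ × ℕ × ℕ) : ℕ × ℕ × ℕ := (q.1, n - (q.2.1 + q.2.2), q.2.2)
def st (_n : ℕ) (q : ℕ × ℕ × ℕ) : ℕ × ℕ × ℕ := (q.2.1, q.1, q.2.2)

lemma core_sh {n : ℕ} {D : Finset (ℕ × ℕ × ℕ)} (hC : Core n D) :
    Core n (D.image (sh n)) := by
  classical
  constructor
  · intro q' hq'
    obtain ⟨q, hq, rfl⟩ := Finset.mem_image.mp hq'
    obtain ⟨h1, h2, h3⟩ := hC.1 q hq
    exact ⟨h1, by unfold sh; simp; omega, by unfold sh; simp; omega⟩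
  · intro i j hi hj
    obtain ⟨q, ⟨hq, ho⟩, huniq⟩ := hC.2 (n-1-i) j (by omega) hj
    obtain ⟨h1, h2, h3⟩ := hC.1 q hq
    refine ⟨sh n q, ⟨Finset.mem_image_of_mem _ hq, ?_⟩, ?_⟩
    · simp only [sh, Owns] at ho ⊢; omega
    · rintro q' ⟨hq', ho'⟩
      obtain ⟨r, hr, rfl⟩ := Finset.mem_image.mp hq'
      obtain ⟨hr1, hr2, hr3⟩ := hC.1 r hr
      have : r = q := huniq r ⟨hr, by simp only [sh, Owns] at ho' ⊢; omega⟩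
      rw [this]

lemma core_sv {n : ℕ} {D : Finset (ℕ × ℕ × ℕ)} (hC : Core n D) :
    Core n (D.image (sv n)) := by
  classical
  constructor
  · intro q' hq'
    obtain ⟨q, hq, rfl⟩ := Finset.mem_image.mp hq'
    obtain ⟨h1, h2, h3⟩ := hC.1 q hq
    exact ⟨h1, by unfold sv; simp; omega, by unfold sv; simp; omega⟩
  · intro i j hi hj
    obtain ⟨q, ⟨hq, ho⟩, huniq⟩ := hC.2 i (n-1-j) hi (by omega)
    obtain ⟨h1, h2, h3⟩ := hC.1 q hq
    refine ⟨sv n q, ⟨Finset.mem_image_of_mem _ hq, ?_⟩, ?_⟩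
    · simp only [sv, Owns] at ho ⊢; omega
    · rintro q' ⟨hq', ho'⟩
      obtain ⟨r, hr, rfl⟩ := Finset.mem_image.mp hq'
      obtain ⟨hr1, hr2, hr3⟩ := hC.1 r hr
      have : r = q := huniq r ⟨hr, by simp only [sv, Owns] at ho' ⊢; omega⟩
      rw [this]

lemma core_st {n : ℕ} {D : Finset (ℕ × ℕ × ℕ)} (hC : Core n D) :
    Core n (D.image (st n)) := by
  classical
  constructor
  · intro q' hq'
    obtain ⟨q, hq, rfl⟩ := Finset.mem_image.mp hq'
    obtain ⟨h1, h2, h3⟩ := hC.1 q hq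
    exact ⟨h1, h3, h2⟩
  · intro i j hi hj
    obtain ⟨q, ⟨hq, ho⟩, huniq⟩ := hC.2 j i hj hi
    refine ⟨st n q, ⟨Finset.mem_image_of_mem _ hq, ?_⟩, ?_⟩
    · simp only [st, Owns] at ho ⊢; omega
    · rintro q' ⟨hq', ho'⟩
      obtain ⟨r, hr, rfl⟩ := Finset.mem_image.mp hq'
      have : r = q := huniq r ⟨hr, by simp only [st, Owns] at ho' ⊢; omega⟩
      rw [this]

lemma sh_inj {n : ℕ} {e f : ℕ × ℕ × ℕ} (he : e.1 + e.2.2 ≤ n) (hf : f.1 + f.2.2 ≤ n)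
    (h : sh n e = sh n f) : e = f := by
  obtain ⟨x, y, s⟩ := e; obtain ⟨x', y', s'⟩ := f
  unfold sh at h
  simp_all [Prod.ext_iff]
  omega

lemma sv_inj {n : ℕ} {e f : ℕ × ℕ × ℕ} (he : e.2.1 + e.2.2 ≤ n) (hf : f.2.1 + f.2.2 ≤ n)
    (h : sv n e = sv n f) : e = f := by
  obtain ⟨x, y, s⟩ := e; obtain ⟨x', y', s'⟩ := f
  unfold sv at h
  simp_all [Prod.ext_iff]
  omega

lemma st_inj {n : ℕ} {e f : ℕ × ℕ × ℕ} (h : st n e = st n f) : e = f := by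
  obtain ⟨x, y, s⟩ := e; obtain ⟨x', y', s'⟩ := f
  unfold st at h
  simp_all [Prod.ext_iff]

lemma gcd_image_side {n : ℕ} (σ : ℕ → (ℕ × ℕ × ℕ) → ℕ × ℕ × ℕ)
    (hσ : ∀ q, (σ n q).2.2 = q.2.2) (D : Finset (ℕ × ℕ × ℕ)) :
    (D.image (σ n)).gcd (fun q => q.2.2) = D.gcd (fun q => q.2.2) := by
  classical
  rw [Finset.gcd_image]
  apply Finset.gcd_congr rfl
  intro q _
  exact hσ q

lemma cornered_sh {n : ℕ} {q : ℕ × ℕ × ℕ} (hb : q.1 + q.2.2 ≤ n)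
    (h : Cornered n q) : Cornered n (sh n q) := by
  simp only [sh, Cornered] at h ⊢; omega

lemma cornered_sv {n : ℕ} {q : ℕ × ℕ × ℕ} (hb : q.2.1 + q.2.2 ≤ n)
    (h : Cornered n q) : Cornered n (sv n q) := by
  simp only [sv, Cornered] at h ⊢; omega

lemma cornered_st {n : ℕ} {q : ℕ × ℕ × ℕ} (h : Cornered n q) : Cornered n (st n q) := by
  simp only [st, Cornered] at h ⊢; omega

lemma setup_sh {n : ℕ} {D : Finset (ℕ × ℕ × ℕ)} {e f : ℕ × ℕ × ℕ}
    (h : Setup n D e f) : Setup n (D.image (sh n)) (sh n e) (sh n f) := by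
  obtain ⟨hC, he, hf, hef, hcls⟩ := h
  refine ⟨core_sh hC, Finset.mem_image_of_mem _ he, Finset.mem_image_of_mem _ hf, ?_, ?_⟩
  · intro hcon
    exact hef (sh_inj (hC.1 e he).2.1 (hC.1 f hf).2.1 hcon)
  · intro q' hq'
    obtain ⟨q, hq, rfl⟩ := Finset.mem_image.mp hq'
    rcases hcls q hq with rfl | rfl | h
    · exact Or.inl rfl
    · exact Or.inr (Or.inl rfl)
    · exact Or.inr (Or.inr (cornered_sh (hC.1 q hq).2.1 h))

lemma setup_sv {n : ℕ} {D : Finset (ℕ × ℕ × ℕ)} {e f : ℕ × ℕ × ℕ}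
    (h : Setup n D e f) : Setup n (D.image (sv n)) (sv n e) (sv n f) := by
  obtain ⟨hC, he, hf, hef, hcls⟩ := h
  refine ⟨core_sv hC, Finset.mem_image_of_mem _ he, Finset.mem_image_of_mem _ hf, ?_, ?_⟩
  · intro hcon
    exact hef (sv_inj (hC.1 e he).2.2 (hC.1 f hf).2.2 hcon)
  · intro q' hq'
    obtain ⟨q, hq, rfl⟩ := Finset.mem_image.mp hq'
    rcases hcls q hq with rfl | rfl | h
    · exact Or.inl rfl
    · exact Or.inr (Or.inl rfl)
    · exact Or.inr (Or.inr (cornered_sv (hC.1 q hq).2.2 h))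

lemma setup_st {n : ℕ} {D : Finset (ℕ × ℕ × ℕ)} {e f : ℕ × ℕ × ℕ}
    (h : Setup n D e f) : Setup n (D.image (st n)) (st n e) (st n f) := by
  obtain ⟨hC, he, hf, hef, hcls⟩ := h
  refine ⟨core_st hC, Finset.mem_image_of_mem _ he, Finset.mem_image_of_mem _ hf, ?_, ?_⟩
  · intro hcon
    exact hef (st_inj hcon)
  · intro q' hq'
    obtain ⟨q, hq, rfl⟩ := Finset.mem_image.mp hq'
    rcases hcls q hq with rfl | rfl | h
    · exact Or.inl rfl
    · exact Or.inr (Or.inl rfl)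
    · exact Or.inr (Or.inr (cornered_st h))

lemma sh_B {n : ℕ} {q : ℕ × ℕ × ℕ} (hb : q.1 + q.2.2 ≤ n) (h : Bonly n q) :
    Bonly n (sh n q) := by simp only [sh, Bonly] at h ⊢; omega
lemma sh_RL {n : ℕ} {q : ℕ × ℕ × ℕ} (hb : q.1 + q.2.2 ≤ n) (h : Ronly n q) :
    Lonly n (sh n q) := by simp only [sh, Ronly, Lonly] at h ⊢; omega
lemma sh_I {n : ℕ} {q : ℕ × ℕ × ℕ} (hb : q.1 + q.2.2 ≤ n) (h : Inside n q) :
    Inside n (sh n q) := by simp only [sh, Inside] at h ⊢; omega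
lemma sv_TB {n : ℕ} {q : ℕ × ℕ × ℕ} (hb : q.2.1 + q.2.2 ≤ n) (h : Tonly n q) :
    Bonly n (sv n q) := by simp only [sv, Tonly, Bonly] at h ⊢; omega
lemma sv_L {n : ℕ} {q : ℕ × ℕ × ℕ} (hb : q.2.1 + q.2.2 ≤ n) (h : Lonly n q) :
    Lonly n (sv n q) := by simp only [sv, Lonly] at h ⊢; omega
lemma sv_R {n : ℕ} {q : ℕ × ℕ × ℕ} (hb : q.2.1 + q.2.2 ≤ n) (h : Ronly n q) :
    Ronly n (sv n q) := by simp only [sv, Ronly] at h ⊢; omega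
lemma sv_I {n : ℕ} {q : ℕ × ℕ × ℕ} (hb : q.2.1 + q.2.2 ≤ n) (h : Inside n q) :
    Inside n (sv n q) := by simp only [sv, Inside] at h ⊢; omega
lemma st_LB {n : ℕ} {q : ℕ × ℕ × ℕ} (h : Lonly n q) : Bonly n (st n q) := by
  simp only [st, Lonly, Bonly] at h ⊢; omega
lemma st_RT {n : ℕ} {q : ℕ × ℕ × ℕ} (h : Ronly n q) : Tonly n (st n q) := by
  simp only [st, Ronly, Tonly] at h ⊢; omega
lemma st_I {n : ℕ} {q : ℕ × ℕ × ℕ} (h : Inside n q) : Inside n (st n q) := by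
  simp only [st, Inside] at h ⊢; omega

lemma cornered_pin {n : ℕ} {D : Finset (ℕ × ℕ × ℕ)} (hC : Core n D) (hn : 0 < n)
    {a b c d : ℕ} (hA : (0,0,a) ∈ D) (hB : (n-b,0,b) ∈ D) (hTL : (0,n-c,c) ∈ D)
    (hTR : (n-d,n-d,d) ∈ D)
    (ha : 0 < a) (hb : 0 < b) (hbn : b < n) (hc : 0 < c) (hcn : c < n)
    (hd : 0 < d) (hdn : d < n)
    {q : ℕ × ℕ × ℕ} (hq : q ∈ D) (hcor : Cornered n q) :
    q = (0,0,a) ∨ q = (n-b,0,b) ∨ q = (0,n-c,c) ∨ q = (n-d,n-d,d) := by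
  obtain ⟨hqpos, hqx, hqy⟩ := hC.1 q hq
  rcases hcor with ⟨h1, h2⟩ | ⟨h1, h2⟩ | ⟨h1, h2⟩ | ⟨h1, h2⟩
  · left
    have o1 : Owns q 0 0 := by simp [Owns]; omega
    have o2 : Owns (0,0,a) 0 0 := by simp [Owns]; omega
    exact owns_unique hC hq hA hn hn o1 o2
  · right; left
    have o1 : Owns q (n-1) 0 := by simp [Owns]; omega
    have o2 : Owns (n-b,0,b) (n-1) 0 := by simp [Owns]; omega
    exact owns_unique hC hq hB (by omega) hn o1 o2
  · right; right; left
    have o1 : Owns q 0 (n-1) := by simp [Owns]; omega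
    have o2 : Owns (0,n-c,c) 0 (n-1) := by simp [Owns]; omega
    exact owns_unique hC hq hTL hn (by omega) o1 o2
  · right; right; right
    have o1 : Owns q (n-1) (n-1) := by simp [Owns]; omega
    have o2 : Owns (n-d,n-d,d) (n-1) (n-1) := by simp [Owns]; omega
    exact owns_unique hC hq hTR (by omega) (by omega) o1 o2

lemma two_edge_bottom {n : ℕ} {D : Finset (ℕ × ℕ × ℕ)} (hC : Core n D) (hn : 0 < n)
    {a b : ℕ} (hA : (0,0,a) ∈ D) (hB : (n-b,0,b) ∈ D)
    (ha : 0 < a) (han : a < n) (hb : 0 < b) (hbn : b < n)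
    (hbot : ∀ q ∈ D, q.2.1 = 0 → q = (0,0,a) ∨ q = (n-b,0,b)) : n = a + b := by
  obtain ⟨q1, hq1, ho1⟩ := exists_owner hC han hn
  have hy1 : q1.2.1 = 0 := by
    have := ho1.2.2.1; omega
  rcases hbot q1 hq1 hy1 with rfl | rfl
  · simp [Owns] at ho1
  · simp [Owns] at ho1
    by_contra hne
    have h2 : Owns (0,0,a) (n-b) 0 := by simp [Owns]; omega
    have h3 : Owns (n-b,0,b) (n-b) 0 := by simp [Owns]; omega
    have := owns_unique hC hA hB (by omega) hn h2 h3
    simp [Prod.ext_iff] at this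
    omega

lemma two_edge_top {n : ℕ} {D : Finset (ℕ × ℕ × ℕ)} (hC : Core n D) (hn : 0 < n)
    {c d : ℕ} (hTL : (0,n-c,c) ∈ D) (hTR : (n-d,n-d,d) ∈ D)
    (hc : 0 < c) (hcn : c < n) (hd : 0 < d) (hdn : d < n)
    (htop : ∀ q ∈ D, q.2.1 + q.2.2 = n → q = (0,n-c,c) ∨ q = (n-d,n-d,d)) :
    n = c + d := by
  obtain ⟨q1, hq1, ho1⟩ := exists_owner hC hcn (show n-1 < n by omega)
  have hy1 : q1.2.1 + q1.2.2 = n := by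
    have h1 := ho1.2.2.1; have h2 := ho1.2.2.2
    have := (hC.1 q1 hq1).2.2; omega
  rcases htop q1 hq1 hy1 with rfl | rfl
  · simp [Owns] at ho1
  · simp [Owns] at ho1
    by_contra hne
    have h2 : Owns (0,n-c,c) (n-d) (n-1) := by simp [Owns]; omega
    have h3 : Owns (n-d,n-d,d) (n-d) (n-1) := by simp [Owns]; omega
    have := owns_unique hC hTL hTR (by omega) (by omega) h2 h3
    simp [Prod.ext_iff] at this
    omega

lemma two_edge_left {n : ℕ} {D : Finset (ℕ × ℕ × ℕ)} (hC : Core n D) (hn : 0 < n)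
    {a c : ℕ} (hA : (0,0,a) ∈ D) (hTL : (0,n-c,c) ∈ D)
    (ha : 0 < a) (han : a < n) (hc : 0 < c) (hcn : c < n)
    (hleft : ∀ q ∈ D, q.1 = 0 → q = (0,0,a) ∨ q = (0,n-c,c)) : n = a + c := by
  obtain ⟨q1, hq1, ho1⟩ := exists_owner hC hn han
  have hx1 : q1.1 = 0 := by
    have := ho1.1; omega
  rcases hleft q1 hq1 hx1 with rfl | rfl
  · simp [Owns] at ho1
  · simp [Owns] at ho1
    by_contra hne
    have h2 : Owns (0,0,a) 0 (n-c) := by simp [Owns]; omega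
    have h3 : Owns (0,n-c,c) 0 (n-c) := by simp [Owns]; omega
    have := owns_unique hC hA hTL hn (by omega) h2 h3
    simp [Prod.ext_iff] at this
    omega

lemma two_edge_right {n : ℕ} {D : Finset (ℕ × ℕ × ℕ)} (hC : Core n D) (hn : 0 < n)
    {b d : ℕ} (hB : (n-b,0,b) ∈ D) (hTR : (n-d,n-d,d) ∈ D)
    (hb : 0 < b) (hbn : b < n) (hd : 0 < d) (hdn : d < n)
    (hright : ∀ q ∈ D, q.1 + q.2.2 = n → q = (n-b,0,b) ∨ q = (n-d,n-d,d)) :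
    n = b + d := by
  obtain ⟨q1, hq1, ho1⟩ := exists_owner hC (show n-1 < n by omega) hbn
  have hx1 : q1.1 + q1.2.2 = n := by
    have h1 := ho1.1; have h2 := ho1.2.1
    have := (hC.1 q1 hq1).2.1; omega
  rcases hright q1 hq1 hx1 with rfl | rfl
  · simp [Owns] at ho1
  · simp [Owns] at ho1
    by_contra hne
    have h2 : Owns (n-b,0,b) (n-1) (n-d) := by simp [Owns]; omega
    have h3 : Owns (n-d,n-d,d) (n-1) (n-d) := by simp [Owns]; omega
    have := owns_unique hC hB hTR (by omega) (by omega) h2 h3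
    simp [Prod.ext_iff] at this
    omega

lemma three_edge_bottom {n : ℕ} {D : Finset (ℕ × ℕ × ℕ)} (hC : Core n D) (hn : 0 < n)
    {a b xe se : ℕ} (hA : (0,0,a) ∈ D) (hB : (n-b,0,b) ∈ D) (hE : (xe,0,se) ∈ D)
    (ha : 0 < a) (han : a < n) (hb : 0 < b) (hbn : b < n) (hse : 0 < se)
    (hxn : xe + se ≤ n) (hxe0 : xe ≠ 0) (hxen : xe + se ≠ n)
    (hbot : ∀ q ∈ D, q.2.1 = 0 → q = (0,0,a) ∨ q = (n-b,0,b) ∨ q = (xe,0,se)) :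
    xe = a ∧ n = a + se + b := by
  have hAE : ((0,0,a) : ℕ×ℕ×ℕ) ≠ (xe,0,se) := by simp [Prod.ext_iff]; omega
  have hBE : ((n-b,0,b) : ℕ×ℕ×ℕ) ≠ (xe,0,se) := by simp [Prod.ext_iff]; omega
  have hAB : ((0,0,a) : ℕ×ℕ×ℕ) ≠ (n-b,0,b) := by simp [Prod.ext_iff]; omega
  obtain ⟨q1, hq1, ho1⟩ := exists_owner hC han hn
  have hy1 : q1.2.1 = 0 := by have := ho1.2.2.1; omega
  have hxea : xe = a := by
    rcases hbot q1 hq1 hy1 with rfl | rfl | rfl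
    · simp [Owns] at ho1 <;> omega
    · exfalso
      simp [Owns] at ho1
      rcases lt_or_ge xe a with h | h
      · have o1 : Owns (0,0,a) xe 0 := by simp [Owns]; omega
        have o2 : Owns (xe,0,se) xe 0 := by simp [Owns]; omega
        exact hAE (owns_unique hC hA hE (by omega) hn o1 o2)
      · have o1 : Owns (n-b,0,b) xe 0 := by simp [Owns]; omega
        have o2 : Owns (xe,0,se) xe 0 := by simp [Owns]; omega
        exact hBE (owns_unique hC hB hE (by omega) hn o1 o2)
    · simp [Owns] at ho1
      rcases lt_or_ge xe a with h | h
      · exfalso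
        have o1 : Owns (0,0,a) xe 0 := by simp [Owns]; omega
        have o2 : Owns (xe,0,se) xe 0 := by simp [Owns]; omega
        exact hAE (owns_unique hC hA hE (by omega) hn o1 o2)
      · omega
  refine ⟨hxea, ?_⟩
  have hlt : a + se < n := by omega
  obtain ⟨q2, hq2, ho2⟩ := exists_owner hC hlt hn
  have hy2 : q2.2.1 = 0 := by have := ho2.2.2.1; omega
  rcases hbot q2 hq2 hy2 with rfl | rfl | rfl
  · simp [Owns] at ho2 <;> omega
  · simp [Owns] at ho2
    by_contra hne
    rcases lt_or_ge (n-b) a with h | h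
    · have o1 : Owns (0,0,a) (n-b) 0 := by simp [Owns]; omega
      have o2 : Owns (n-b,0,b) (n-b) 0 := by simp [Owns]; omega
      exact hAB (owns_unique hC hA hB (by omega) hn o1 o2)
    · have o1 : Owns (n-b,0,b) (n-b) 0 := by simp [Owns]; omega
      have o2 : Owns (xe,0,se) (n-b) 0 := by simp [Owns]; omega
      exact hBE (owns_unique hC hB hE (by omega) hn o1 o2)
  · simp [Owns] at ho2 <;> omega

lemma three_edge_left {n : ℕ} {D : Finset (ℕ × ℕ × ℕ)} (hC : Core n D) (hn : 0 < n)
    {a c yf sf : ℕ} (hA : (0,0,a) ∈ D) (hTL : (0,n-c,c) ∈ D) (hF : (0,yf,sf) ∈ D)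
    (ha : 0 < a) (han : a < n) (hc : 0 < c) (hcn : c < n) (hsf : 0 < sf)
    (hyn : yf + sf ≤ n) (hyf0 : yf ≠ 0) (hyfn : yf + sf ≠ n)
    (hleft : ∀ q ∈ D, q.1 = 0 → q = (0,0,a) ∨ q = (0,n-c,c) ∨ q = (0,yf,sf)) :
    yf = a ∧ n = a + sf + c := by
  have hAF : ((0,0,a) : ℕ×ℕ×ℕ) ≠ (0,yf,sf) := by simp [Prod.ext_iff]; omega
  have hCF : ((0,n-c,c) : ℕ×ℕ×ℕ) ≠ (0,yf,sf) := by simp [Prod.ext_iff]; omega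
  have hAC : ((0,0,a) : ℕ×ℕ×ℕ) ≠ (0,n-c,c) := by simp [Prod.ext_iff]; omega
  obtain ⟨q1, hq1, ho1⟩ := exists_owner hC hn han
  have hx1 : q1.1 = 0 := by have := ho1.1; omega
  have hyfa : yf = a := by
    rcases hleft q1 hq1 hx1 with rfl | rfl | rfl
    · simp [Owns] at ho1 <;> omega
    · exfalso
      simp [Owns] at ho1
      rcases lt_or_ge yf a with h | h
      · have o1 : Owns (0,0,a) 0 yf := by simp [Owns]; omega
        have o2 : Owns (0,yf,sf) 0 yf := by simp [Owns]; omega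
        exact hAF (owns_unique hC hA hF hn (by omega) o1 o2)
      · have o1 : Owns (0,n-c,c) 0 yf := by simp [Owns]; omega
        have o2 : Owns (0,yf,sf) 0 yf := by simp [Owns]; omega
        exact hCF (owns_unique hC hTL hF hn (by omega) o1 o2)
    · simp [Owns] at ho1
      rcases lt_or_ge yf a with h | h
      · exfalso
        have o1 : Owns (0,0,a) 0 yf := by simp [Owns]; omega
        have o2 : Owns (0,yf,sf) 0 yf := by simp [Owns]; omega
        exact hAF (owns_unique hC hA hF hn (by omega) o1 o2)
      · omega
  refine ⟨hyfa, ?_⟩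
  have hlt : a + sf < n := by omega
  obtain ⟨q2, hq2, ho2⟩ := exists_owner hC hn hlt
  have hx2 : q2.1 = 0 := by have := ho2.1; omega
  rcases hleft q2 hq2 hx2 with rfl | rfl | rfl
  · simp [Owns] at ho2 <;> omega
  · simp [Owns] at ho2
    by_contra hne
    rcases lt_or_ge (n-c) a with h | h
    · have o1 : Owns (0,0,a) 0 (n-c) := by simp [Owns]; omega
      have o2 : Owns (0,n-c,c) 0 (n-c) := by simp [Owns]; omega
      exact hAC (owns_unique hC hA hTL hn (by omega) o1 o2)
    · have o1 : Owns (0,n-c,c) 0 (n-c) := by simp [Owns]; omega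
      have o2 : Owns (0,yf,sf) 0 (n-c) := by simp [Owns]; omega
      exact hCF (owns_unique hC hTL hF hn (by omega) o1 o2)
  · simp [Owns] at ho2 <;> omega

lemma three_edge_top {n : ℕ} {D : Finset (ℕ × ℕ × ℕ)} (hC : Core n D) (hn : 0 < n)
    {c d xf sf : ℕ} (hTL : (0,n-c,c) ∈ D) (hTR : (n-d,n-d,d) ∈ D)
    (hF : (xf,n-sf,sf) ∈ D)
    (hc : 0 < c) (hcn : c < n) (hd : 0 < d) (hdn : d < n) (hsf : 0 < sf) (hsfn : sf ≤ n)
    (hxn : xf + sf ≤ n) (hxf0 : xf ≠ 0) (hxfn : xf + sf ≠ n)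
    (htop : ∀ q ∈ D, q.2.1 + q.2.2 = n → q = (0,n-c,c) ∨ q = (n-d,n-d,d) ∨ q = (xf,n-sf,sf)) :
    xf = c ∧ n = c + sf + d := by
  have hCF : ((0,n-c,c) : ℕ×ℕ×ℕ) ≠ (xf,n-sf,sf) := by simp [Prod.ext_iff]; omega
  have hDF : ((n-d,n-d,d) : ℕ×ℕ×ℕ) ≠ (xf,n-sf,sf) := by simp [Prod.ext_iff]; omega
  have hCD : ((0,n-c,c) : ℕ×ℕ×ℕ) ≠ (n-d,n-d,d) := by simp [Prod.ext_iff]; omega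
  obtain ⟨q1, hq1, ho1⟩ := exists_owner hC hcn (show n-1 < n by omega)
  have hy1 : q1.2.1 + q1.2.2 = n := by
    have h1 := ho1.2.2.1; have h2 := ho1.2.2.2
    have := (hC.1 q1 hq1).2.2; omega
  have hxfc : xf = c := by
    rcases htop q1 hq1 hy1 with rfl | rfl | rfl
    · simp [Owns] at ho1 <;> omega
    · exfalso
      simp [Owns] at ho1
      rcases lt_or_ge xf c with h | h
      · have o1 : Owns (0,n-c,c) xf (n-1) := by simp [Owns]; omega
        have o2 : Owns (xf,n-sf,sf) xf (n-1) := by simp [Owns]; omega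
        exact hCF (owns_unique hC hTL hF (by omega) (by omega) o1 o2)
      · have o1 : Owns (n-d,n-d,d) xf (n-1) := by simp [Owns]; omega
        have o2 : Owns (xf,n-sf,sf) xf (n-1) := by simp [Owns]; omega
        exact hDF (owns_unique hC hTR hF (by omega) (by omega) o1 o2)
    · simp [Owns] at ho1
      rcases lt_or_ge xf c with h | h
      · exfalso
        have o1 : Owns (0,n-c,c) xf (n-1) := by simp [Owns]; omega
        have o2 : Owns (xf,n-sf,sf) xf (n-1) := by simp [Owns]; omega
        exact hCF (owns_unique hC hTL hF (by omega) (by omega) o1 o2)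
      · omega
  refine ⟨hxfc, ?_⟩
  have hlt : c + sf < n := by omega
  obtain ⟨q2, hq2, ho2⟩ := exists_owner hC hlt (show n-1 < n by omega)
  have hy2 : q2.2.1 + q2.2.2 = n := by
    have h1 := ho2.2.2.1; have h2 := ho2.2.2.2
    have := (hC.1 q2 hq2).2.2; omega
  rcases htop q2 hq2 hy2 with rfl | rfl | rfl
  · simp [Owns] at ho2 <;> omega
  · simp [Owns] at ho2
    by_contra hne
    rcases lt_or_ge (n-d) c with h | h
    · have o1 : Owns (0,n-c,c) (n-d) (n-1) := by simp [Owns]; omega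
      have o2 : Owns (n-d,n-d,d) (n-d) (n-1) := by simp [Owns]; omega
      exact hCD (owns_unique hC hTL hTR (by omega) (by omega) o1 o2)
    · have o1 : Owns (n-d,n-d,d) (n-d) (n-1) := by simp [Owns]; omega
      have o2 : Owns (xf,n-sf,sf) (n-d) (n-1) := by simp [Owns]; omega
      exact hDF (owns_unique hC hTR hF (by omega) (by omega) o1 o2)
  · simp [Owns] at ho2 <;> omega

lemma sum_six {n : ℕ} {D : Finset (ℕ × ℕ × ℕ)} (hC : Core n D)
    {q1 q2 q3 q4 q5 q6 : ℕ × ℕ × ℕ}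
    (m1 : q1 ∈ D) (m2 : q2 ∈ D) (m3 : q3 ∈ D) (m4 : q4 ∈ D) (m5 : q5 ∈ D) (m6 : q6 ∈ D)
    (hall : ∀ q ∈ D, q = q1 ∨ q = q2 ∨ q = q3 ∨ q = q4 ∨ q = q5 ∨ q = q6)
    (h1 : q1 ∉ ({q2,q3,q4,q5,q6} : Finset (ℕ×ℕ×ℕ)))
    (h2 : q2 ∉ ({q3,q4,q5,q6} : Finset (ℕ×ℕ×ℕ)))
    (h3 : q3 ∉ ({q4,q5,q6} : Finset (ℕ×ℕ×ℕ)))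
    (h4 : q4 ∉ ({q5,q6} : Finset (ℕ×ℕ×ℕ)))
    (h5 : q5 ∉ ({q6} : Finset (ℕ×ℕ×ℕ))) :
    q1.2.2*q1.2.2 + q2.2.2*q2.2.2 + q3.2.2*q3.2.2 + q4.2.2*q4.2.2
      + q5.2.2*q5.2.2 + q6.2.2*q6.2.2 = n*n := by
  classical
  have hDeq : D = ({q1,q2,q3,q4,q5,q6} : Finset (ℕ×ℕ×ℕ)) := by
    apply Finset.Subset.antisymm
    · intro q hq
      simp only [Finset.mem_insert, Finset.mem_singleton]
      exact hall q hq
    · intro q hq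
      simp only [Finset.mem_insert, Finset.mem_singleton] at hq
      rcases hq with rfl | rfl | rfl | rfl | rfl | rfl <;> assumption
  have harea := area_core hC
  rw [hDeq, Finset.sum_insert h1, Finset.sum_insert h2, Finset.sum_insert h3,
    Finset.sum_insert h4, Finset.sum_insert h5, Finset.sum_singleton] at harea
  linarith

set_option maxHeartbeats 1000000 in
lemma caseII {n : ℕ} {D : Finset (ℕ × ℕ × ℕ)} {e f : ℕ × ℕ × ℕ}
    (hS : Setup n D e f) (hIe : Inside n e) (hIf : Inside n f) : False := by
  obtain ⟨hC, heD, hfD, hef, hcls⟩ := hS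
  have hside := side_lt hC heD hfD hef
  obtain ⟨hepos, hex, hey⟩ := hC.1 e heD
  obtain ⟨hfpos, hfx, hfy⟩ := hC.1 f hfD
  have hn : 0 < n := by omega
  obtain ⟨a,b,c,d,hA,hB,hTL,hTR,ha,han,hb,hbn,hc,hcn,hd,hdn⟩ := corners hC heD hfD hef hn
  have pin : ∀ q ∈ D, Cornered n q →
      q = (0,0,a) ∨ q = (n-b,0,b) ∨ q = (0,n-c,c) ∨ q = (n-d,n-d,d) :=
    fun q hq hcor => cornered_pin hC hn hA hB hTL hTR ha hb hbn hc hcn hd hdn hq hcor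
  have hbot2 : ∀ q ∈ D, q.2.1 = 0 → q = (0,0,a) ∨ q = (n-b,0,b) := by
    intro q hq hy
    rcases hcls q hq with rfl | rfl | hcor
    · exact absurd hy hIe.2.2.1
    · exact absurd hy hIf.2.2.1
    · rcases pin q hq hcor with rfl | rfl | rfl | rfl
      · exact Or.inl rfl
      · exact Or.inr rfl
      · exfalso; simp at hy; omega
      · exfalso; simp at hy; omega
  have htop2 : ∀ q ∈ D, q.2.1 + q.2.2 = n → q = (0,n-c,c) ∨ q = (n-d,n-d,d) := by
    intro q hq hy
    rcases hcls q hq with rfl | rfl | hcor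
    · exact absurd hy hIe.2.2.2
    · exact absurd hy hIf.2.2.2
    · rcases pin q hq hcor with rfl | rfl | rfl | rfl
      · exfalso; simp at hy; omega
      · exfalso; simp at hy; omega
      · exact Or.inl rfl
      · exact Or.inr rfl
  have hleft2 : ∀ q ∈ D, q.1 = 0 → q = (0,0,a) ∨ q = (0,n-c,c) := by
    intro q hq hy
    rcases hcls q hq with rfl | rfl | hcor
    · exact absurd hy hIe.1
    · exact absurd hy hIf.1
    · rcases pin q hq hcor with rfl | rfl | rfl | rfl
      · exact Or.inl rfl
      · exfalso; simp at hy; omega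
      · exact Or.inr rfl
      · exfalso; simp at hy; omega
  have hright2 : ∀ q ∈ D, q.1 + q.2.2 = n → q = (n-b,0,b) ∨ q = (n-d,n-d,d) := by
    intro q hq hy
    rcases hcls q hq with rfl | rfl | hcor
    · exact absurd hy hIe.2.1
    · exact absurd hy hIf.2.1
    · rcases pin q hq hcor with rfl | rfl | rfl | rfl
      · exfalso; simp at hy; omega
      · exact Or.inl rfl
      · exfalso; simp at hy; omega
      · exact Or.inr rfl
  have e1 : n = a + b := two_edge_bottom hC hn hA hB ha han hb hbn hbot2
  have e2 : n = c + d := two_edge_top hC hn hTL hTR hc hcn hd hdn htop2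
  have e3 : n = a + c := two_edge_left hC hn hA hTL ha han hc hcn hleft2
  have e4 : n = b + d := two_edge_right hC hn hB hTR hb hbn hd hdn hright2
  -- distinctness of the six squares
  have hallq : ∀ q ∈ D, q = (0,0,a) ∨ q = (n-b,0,b) ∨ q = (0,n-c,c) ∨ q = (n-d,n-d,d)
      ∨ q = e ∨ q = f := by
    intro q hq
    rcases hcls q hq with rfl | rfl | hcor
    · tauto
    · tauto
    · rcases pin q hq hcor with rfl | rfl | rfl | rfl <;> tauto
  obtain ⟨xe, ye, se⟩ := e
  obtain ⟨xf, yf, sf⟩ := f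
  obtain ⟨he1, he2, he3, he4⟩ := hIe
  obtain ⟨hf1, hf2, hf3, hf4⟩ := hIf
  dsimp only at he1 he2 he3 he4 hf1 hf2 hf3 hf4 hex hey hfx hfy hepos hfpos
  have hsum := sum_six hC hA hB hTL hTR heD hfD hallq
    (by simp [Prod.ext_iff]; omega) (by simp [Prod.ext_iff]; omega)
    (by simp [Prod.ext_iff]; omega) (by simp [Prod.ext_iff]; omega)
    (by simpa using hef)
  dsimp only at hsum
  have key : (a:ℤ)*a + b*b + c*c + d*d + se*se + sf*sf = (n:ℤ)*n := by exact_mod_cast hsum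
  have k1 : (n:ℤ) = a + b := by exact_mod_cast e1
  have k2 : (n:ℤ) = c + d := by exact_mod_cast e2
  have k3 : (n:ℤ) = a + c := by exact_mod_cast e3
  have k4 : (n:ℤ) = b + d := by exact_mod_cast e4
  have kse : (1:ℤ) ≤ se := by exact_mod_cast hepos
  have ksf : (1:ℤ) ≤ sf := by exact_mod_cast hfpos
  nlinarith [sq_nonneg ((a:ℤ) - b), sq_nonneg ((se:ℤ)), sq_nonneg ((sf:ℤ))]

lemma caseBI {n : ℕ} {D : Finset (ℕ × ℕ × ℕ)} {e f : ℕ × ℕ × ℕ}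
    (hS : Setup n D e f) (hBe : Bonly n e) (hIf : Inside n f) : False := by
  obtain ⟨hC, heD, hfD, hef, hcls⟩ := hS
  have hside := side_lt hC heD hfD hef
  have hsideE := hside e heD
  obtain ⟨hepos, hex, hey⟩ := hC.1 e heD
  obtain ⟨hfpos, hfx, hfy⟩ := hC.1 f hfD
  have hn : 0 < n := by omega
  obtain ⟨a,b,c,d,hA,hB,hTL,hTR,ha,han,hb,hbn,hc,hcn,hd,hdn⟩ := corners hC heD hfD hef hn
  have pin : ∀ q ∈ D, Cornered n q →
      q = (0,0,a) ∨ q = (n-b,0,b) ∨ q = (0,n-c,c) ∨ q = (n-d,n-d,d) :=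
    fun q hq hcor => cornered_pin hC hn hA hB hTL hTR ha hb hbn hc hcn hd hdn hq hcor
  obtain ⟨xe, ye, se⟩ := e
  obtain ⟨xf, yf, sf⟩ := f
  obtain ⟨he1, he2, he3⟩ := hBe
  obtain ⟨hf1, hf2, hf3, hf4⟩ := hIf
  dsimp only at he1 he2 he3 hf1 hf2 hf3 hf4 hex hey hfx hfy hepos hfpos hsideE
  subst he1
  have hbot3 : ∀ q ∈ D, q.2.1 = 0 →
      q = (0,0,a) ∨ q = (n-b,0,b) ∨ q = (xe,0,se) := by
    intro q hq hy
    rcases hcls q hq with rfl | rfl | hcor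
    · tauto
    · exact absurd hy hf3
    · rcases pin q hq hcor with rfl | rfl | rfl | rfl
      · tauto
      · tauto
      · exfalso; simp at hy; omega
      · exfalso; simp at hy; omega
  have htop2 : ∀ q ∈ D, q.2.1 + q.2.2 = n → q = (0,n-c,c) ∨ q = (n-d,n-d,d) := by
    intro q hq hy
    rcases hcls q hq with rfl | rfl | hcor
    · exfalso; dsimp only at hy; omega
    · exact absurd hy hf4
    · rcases pin q hq hcor with rfl | rfl | rfl | rfl
      · exfalso; simp at hy; omega
      · exfalso; simp at hy; omega
      · tauto
      · tauto
  have hleft2 : ∀ q ∈ D, q.1 = 0 → q = (0,0,a) ∨ q = (0,n-c,c) := by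
    intro q hq hy
    rcases hcls q hq with rfl | rfl | hcor
    · exact absurd hy he2
    · exact absurd hy hf1
    · rcases pin q hq hcor with rfl | rfl | rfl | rfl
      · tauto
      · exfalso; simp at hy; omega
      · tauto
      · exfalso; simp at hy; omega
  have hright2 : ∀ q ∈ D, q.1 + q.2.2 = n → q = (n-b,0,b) ∨ q = (n-d,n-d,d) := by
    intro q hq hy
    rcases hcls q hq with rfl | rfl | hcor
    · exact absurd hy he3
    · exact absurd hy hf2
    · rcases pin q hq hcor with rfl | rfl | rfl | rfl
      · exfalso; simp at hy; omega
      · tauto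
      · exfalso; simp at hy; omega
      · tauto
  obtain ⟨hxea, e1⟩ := three_edge_bottom hC hn hA hB heD ha han hb hbn hepos hex he2 he3 hbot3
  have e2 : n = c + d := two_edge_top hC hn hTL hTR hc hcn hd hdn htop2
  have e3 : n = a + c := two_edge_left hC hn hA hTL ha han hc hcn hleft2
  have e4 : n = b + d := two_edge_right hC hn hB hTR hb hbn hd hdn hright2
  omega

lemma caseBB {n : ℕ} {D : Finset (ℕ × ℕ × ℕ)} {e f : ℕ × ℕ × ℕ}
    (hS : Setup n D e f) (hBe : Bonly n e) (hBf : Bonly n f) : False := by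
  obtain ⟨hC, heD, hfD, hef, hcls⟩ := hS
  have hside := side_lt hC heD hfD hef
  have hsideE := hside e heD
  have hsideF := hside f hfD
  obtain ⟨hepos, hex, hey⟩ := hC.1 e heD
  obtain ⟨hfpos, hfx, hfy⟩ := hC.1 f hfD
  have hn : 0 < n := by omega
  obtain ⟨a,b,c,d,hA,hB,hTL,hTR,ha,han,hb,hbn,hc,hcn,hd,hdn⟩ := corners hC heD hfD hef hn
  have pin : ∀ q ∈ D, Cornered n q →
      q = (0,0,a) ∨ q = (n-b,0,b) ∨ q = (0,n-c,c) ∨ q = (n-d,n-d,d) :=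
    fun q hq hcor => cornered_pin hC hn hA hB hTL hTR ha hb hbn hc hcn hd hdn hq hcor
  obtain ⟨xe, ye, se⟩ := e
  obtain ⟨xf, yf, sf⟩ := f
  obtain ⟨he1, he2, he3⟩ := hBe
  obtain ⟨hf1, hf2, hf3⟩ := hBf
  dsimp only at he1 he2 he3 hf1 hf2 hf3 hex hey hfx hfy hepos hfpos hsideE hsideF
  subst he1; subst hf1
  have htop2 : ∀ q ∈ D, q.2.1 + q.2.2 = n → q = (0,n-c,c) ∨ q = (n-d,n-d,d) := by
    intro q hq hy
    rcases hcls q hq with rfl | rfl | hcor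
    · exfalso; dsimp only at hy; omega
    · exfalso; dsimp only at hy; omega
    · rcases pin q hq hcor with rfl | rfl | rfl | rfl
      · exfalso; simp at hy; omega
      · exfalso; simp at hy; omega
      · tauto
      · tauto
  have hleft2 : ∀ q ∈ D, q.1 = 0 → q = (0,0,a) ∨ q = (0,n-c,c) := by
    intro q hq hy
    rcases hcls q hq with rfl | rfl | hcor
    · exact absurd hy he2
    · exact absurd hy hf2
    · rcases pin q hq hcor with rfl | rfl | rfl | rfl
      · tauto
      · exfalso; simp at hy; omega
      · tauto
      · exfalso; simp at hy; omega
  have hright2 : ∀ q ∈ D, q.1 + q.2.2 = n → q = (n-b,0,b) ∨ q = (n-d,n-d,d) := by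
    intro q hq hy
    rcases hcls q hq with rfl | rfl | hcor
    · exact absurd hy he3
    · exact absurd hy hf3
    · rcases pin q hq hcor with rfl | rfl | rfl | rfl
      · exfalso; simp at hy; omega
      · tauto
      · exfalso; simp at hy; omega
      · tauto
  have e2 : n = c + d := two_edge_top hC hn hTL hTR hc hcn hd hdn htop2
  have e3 : n = a + c := two_edge_left hC hn hA hTL ha han hc hcn hleft2
  have e4 : n = b + d := two_edge_right hC hn hB hTR hb hbn hd hdn hright2
  have hab : n = a + b := by omega
  -- now the bottom edge has no room for e
  have hxen : xe < n := by omega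
  rcases lt_or_ge xe a with h | h
  · have o1 : Owns (0,0,a) xe 0 := by simp [Owns]; omega
    have o2 : Owns (xe,0,se) xe 0 := by simp [Owns]; omega
    have := owns_unique hC hA heD hxen hn o1 o2
    simp [Prod.ext_iff] at this; omega
  · have o1 : Owns (n-b,0,b) xe 0 := by simp [Owns]; omega
    have o2 : Owns (xe,0,se) xe 0 := by simp [Owns]; omega
    have := owns_unique hC hB heD hxen hn o1 o2
    simp [Prod.ext_iff] at this; omega

lemma caseBT {n : ℕ} {D : Finset (ℕ × ℕ × ℕ)} {e f : ℕ × ℕ × ℕ}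
    (hS : Setup n D e f) (hBe : Bonly n e) (hTf : Tonly n f) : False := by
  obtain ⟨hC, heD, hfD, hef, hcls⟩ := hS
  have hside := side_lt hC heD hfD hef
  have hsideE := hside e heD
  have hsideF := hside f hfD
  obtain ⟨hepos, hex, hey⟩ := hC.1 e heD
  obtain ⟨hfpos, hfx, hfy⟩ := hC.1 f hfD
  have hn : 0 < n := by omega
  obtain ⟨a,b,c,d,hA,hB,hTL,hTR,ha,han,hb,hbn,hc,hcn,hd,hdn⟩ := corners hC heD hfD hef hn
  have pin : ∀ q ∈ D, Cornered n q →
      q = (0,0,a) ∨ q = (n-b,0,b) ∨ q = (0,n-c,c) ∨ q = (n-d,n-d,d) :=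
    fun q hq hcor => cornered_pin hC hn hA hB hTL hTR ha hb hbn hc hcn hd hdn hq hcor
  obtain ⟨xe, ye, se⟩ := e
  obtain ⟨xf, yf, sf⟩ := f
  obtain ⟨he1, he2, he3⟩ := hBe
  obtain ⟨hf1, hf2, hf3⟩ := hTf
  dsimp only at he1 he2 he3 hf1 hf2 hf3 hex hey hfx hfy hepos hfpos hsideE hsideF
  subst he1
  have hyf : yf = n - sf := by omega
  subst hyf
  have hbot3 : ∀ q ∈ D, q.2.1 = 0 →
      q = (0,0,a) ∨ q = (n-b,0,b) ∨ q = (xe,0,se) := by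
    intro q hq hy
    rcases hcls q hq with rfl | rfl | hcor
    · tauto
    · exfalso; dsimp only at hy; omega
    · rcases pin q hq hcor with rfl | rfl | rfl | rfl
      · tauto
      · tauto
      · exfalso; simp at hy; omega
      · exfalso; simp at hy; omega
  have htop3 : ∀ q ∈ D, q.2.1 + q.2.2 = n →
      q = (0,n-c,c) ∨ q = (n-d,n-d,d) ∨ q = (xf,n-sf,sf) := by
    intro q hq hy
    rcases hcls q hq with rfl | rfl | hcor
    · exfalso; dsimp only at hy; omega
    · tauto
    · rcases pin q hq hcor with rfl | rfl | rfl | rfl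
      · exfalso; simp at hy; omega
      · exfalso; simp at hy; omega
      · tauto
      · tauto
  have hleft2 : ∀ q ∈ D, q.1 = 0 → q = (0,0,a) ∨ q = (0,n-c,c) := by
    intro q hq hy
    rcases hcls q hq with rfl | rfl | hcor
    · exact absurd hy he2
    · exact absurd hy hf2
    · rcases pin q hq hcor with rfl | rfl | rfl | rfl
      · tauto
      · exfalso; simp at hy; omega
      · tauto
      · exfalso; simp at hy; omega
  have hright2 : ∀ q ∈ D, q.1 + q.2.2 = n → q = (n-b,0,b) ∨ q = (n-d,n-d,d) := by
    intro q hq hy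
    rcases hcls q hq with rfl | rfl | hcor
    · exact absurd hy he3
    · exact absurd hy hf3
    · rcases pin q hq hcor with rfl | rfl | rfl | rfl
      · exfalso; simp at hy; omega
      · tauto
      · exfalso; simp at hy; omega
      · tauto
  obtain ⟨hxea, e1⟩ := three_edge_bottom hC hn hA hB heD ha han hb hbn hepos hex he2 he3 hbot3
  obtain ⟨hxfc, e2⟩ := three_edge_top hC hn hTL hTR hfD hc hcn hd hdn hfpos (by omega)
    (by omega) hf2 hf3 htop3
  have e3 : n = a + c := two_edge_left hC hn hA hTL ha han hc hcn hleft2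
  have e4 : n = b + d := two_edge_right hC hn hB hTR hb hbn hd hdn hright2
  omega

lemma endgameBL (A B S N : ℤ)
    (key : A*A + B*B + B*B + (A+S)*(A+S) + S*S + S*S = N*N)
    (k1 : N = A + S + B)
    (h1 : S ≤ A) (h2 : A ≤ B) (h3 : B ≤ A + S) (h4 : 1 ≤ S) :
    B = A ∧ A = S := by
  set U := B - A with hU
  have hU0 : 0 ≤ U := by simp [hU]; linarith
  have hUS : U ≤ S := by simp [hU]; linarith
  have keyU : U*U + 2*(S*S) = 2*(S*A) + 2*(S*U) := by
    simp only [hU]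
    linear_combination key + (N + A + S + B) * k1
  have p1 : S*S ≤ S*A := mul_le_mul_of_nonneg_left h1 (by linarith)
  have p2 : U*U ≤ S*U := mul_le_mul_of_nonneg_right hUS hU0
  have p3 : U ≤ S*U := le_mul_of_one_le_left hU0 h4
  have hUe : U = 0 := by linarith
  have hBA : B = A := by simp [hU] at hUe; linarith
  have h9 : 2*S*S = 2*S*A := by linear_combination keyU - (U - 2*S) * hUe
  have h2S : (2*S : ℤ) ≠ 0 := by intro h; linarith
  have hSA : S = A := by
    apply mul_left_cancel₀ h2S
    linear_combination h9
  exact ⟨hBA, hSA.symm⟩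

set_option maxHeartbeats 2000000 in
lemma caseBL {n : ℕ} {D : Finset (ℕ × ℕ × ℕ)} {e f : ℕ × ℕ × ℕ}
    (hS : Setup n D e f) (hg : D.gcd (fun q => q.2.2) = 1)
    (hBe : Bonly n e) (hLf : Lonly n f) : n = 3 := by
  obtain ⟨hC, heD, hfD, hef, hcls⟩ := hS
  have hside := side_lt hC heD hfD hef
  have hsideE := hside e heD
  have hsideF := hside f hfD
  obtain ⟨hepos, hex, hey⟩ := hC.1 e heD
  obtain ⟨hfpos, hfx, hfy⟩ := hC.1 f hfD
  have hn : 0 < n := by omega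
  obtain ⟨a,b,c,d,hA,hB,hTL,hTR,ha,han,hb,hbn,hc,hcn,hd,hdn⟩ := corners hC heD hfD hef hn
  have pin : ∀ q ∈ D, Cornered n q →
      q = (0,0,a) ∨ q = (n-b,0,b) ∨ q = (0,n-c,c) ∨ q = (n-d,n-d,d) :=
    fun q hq hcor => cornered_pin hC hn hA hB hTL hTR ha hb hbn hc hcn hd hdn hq hcor
  obtain ⟨xe, ye, se⟩ := e
  obtain ⟨xf, yf, sf⟩ := f
  obtain ⟨he1, he2, he3⟩ := hBe
  obtain ⟨hf1, hf2, hf3⟩ := hLf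
  dsimp only at he1 he2 he3 hf1 hf2 hf3 hex hey hfx hfy hepos hfpos hsideE hsideF
  subst he1; subst hf1
  have hbot3 : ∀ q ∈ D, q.2.1 = 0 →
      q = (0,0,a) ∨ q = (n-b,0,b) ∨ q = (xe,0,se) := by
    intro q hq hy
    rcases hcls q hq with rfl | rfl | hcor
    · tauto
    · exact absurd hy hf2
    · rcases pin q hq hcor with rfl | rfl | rfl | rfl
      · tauto
      · tauto
      · exfalso; simp at hy; omega
      · exfalso; simp at hy; omega
  have hleft3 : ∀ q ∈ D, q.1 = 0 →
      q = (0,0,a) ∨ q = (0,n-c,c) ∨ q = (0,yf,sf) := by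
    intro q hq hy
    rcases hcls q hq with rfl | rfl | hcor
    · exact absurd hy he2
    · tauto
    · rcases pin q hq hcor with rfl | rfl | rfl | rfl
      · tauto
      · exfalso; simp at hy; omega
      · tauto
      · exfalso; simp at hy; omega
  have htop2 : ∀ q ∈ D, q.2.1 + q.2.2 = n → q = (0,n-c,c) ∨ q = (n-d,n-d,d) := by
    intro q hq hy
    rcases hcls q hq with rfl | rfl | hcor
    · exfalso; dsimp only at hy; omega
    · exact absurd hy hf3
    · rcases pin q hq hcor with rfl | rfl | rfl | rfl
      · exfalso; simp at hy; omega
      · exfalso; simp at hy; omega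
      · tauto
      · tauto
  have hright2 : ∀ q ∈ D, q.1 + q.2.2 = n → q = (n-b,0,b) ∨ q = (n-d,n-d,d) := by
    intro q hq hy
    rcases hcls q hq with rfl | rfl | hcor
    · exact absurd hy he3
    · exfalso; dsimp only at hy; omega
    · rcases pin q hq hcor with rfl | rfl | rfl | rfl
      · exfalso; simp at hy; omega
      · tauto
      · exfalso; simp at hy; omega
      · tauto
  obtain ⟨hxea, e1⟩ := three_edge_bottom hC hn hA hB heD ha han hb hbn hepos hex he2 he3 hbot3
  obtain ⟨hyfa, e2⟩ := three_edge_left hC hn hA hTL hfD ha han hc hcn hfpos hfy hf2 hf3 hleft3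
  have e3 : n = c + d := two_edge_top hC hn hTL hTR hc hcn hd hdn htop2
  have e4 : n = b + d := two_edge_right hC hn hB hTR hb hbn hd hdn hright2
  have hcb : c = b := by omega
  have hsfe : sf = se := by omega
  have hd2 : d = a + se := by omega
  rw [hcb] at hTL
  rw [hd2] at hTR
  rw [hxea] at heD hex hef
  rw [hyfa, hsfe] at hfD hef
  have hallq : ∀ q ∈ D, q = (0,0,a) ∨ q = (n-b,0,b) ∨ q = (0,n-b,b)
      ∨ q = (n-(a+se),n-(a+se),a+se) ∨ q = (a,0,se) ∨ q = (0,a,se) := by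
    intro q hq
    rcases hcls q hq with rfl | rfl | hcor
    · exact Or.inr (Or.inr (Or.inr (Or.inr (Or.inl (by rw [hxea])))))
    · exact Or.inr (Or.inr (Or.inr (Or.inr (Or.inr (by rw [hyfa, hsfe])))))
    · rcases pin q hq hcor with rfl | rfl | rfl | rfl
      · tauto
      · tauto
      · exact Or.inr (Or.inr (Or.inl (by rw [hcb])))
      · exact Or.inr (Or.inr (Or.inr (Or.inl (by rw [hd2]))))
  have hab : a ≤ b := by
    by_contra hcon
    have o1 : Owns (0,0,a) b b := by simp [Owns]; omega
    have o2 : Owns (n-(a+se),n-(a+se),a+se) b b := by simp [Owns]; omega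
    have := owns_unique hC hA hTR hbn hbn o1 o2
    simp [Prod.ext_iff] at this; omega
  have hba : b ≤ a + se := by
    by_contra hcon
    have o1 : Owns (n-b,0,b) (a+se) (a+se) := by simp [Owns]; omega
    have o2 : Owns (0,n-b,b) (a+se) (a+se) := by simp [Owns]; omega
    have := owns_unique hC hB hTL (by omega) (by omega) o1 o2
    simp [Prod.ext_iff] at this; omega
  have hsa : se ≤ a := by
    by_contra hcon
    have o1 : Owns (a,0,se) a a := by simp [Owns]; omega
    have o2 : Owns (0,a,se) a a := by simp [Owns]; omega
    exact hef (owns_unique hC heD hfD han han o1 o2)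
  have hsum := sum_six hC hA hB hTL hTR heD hfD hallq
    (by simp [Prod.ext_iff]; omega) (by simp [Prod.ext_iff]; omega)
    (by simp [Prod.ext_iff]; omega) (by simp [Prod.ext_iff]; omega)
    (by simpa using hef)
  dsimp only at hsum
  -- numeric endgame over ℤ
  have key : (a:ℤ)*a + b*b + b*b + (a+se)*(a+se) + se*se + se*se = (n:ℤ)*n := by
    exact_mod_cast hsum
  have k1 : (n:ℤ) = a + se + b := by exact_mod_cast e1
  have zsa : (se:ℤ) ≤ a := by exact_mod_cast hsa
  have zab : (a:ℤ) ≤ b := by exact_mod_cast hab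
  have zba : (b:ℤ) ≤ a + se := by exact_mod_cast hba
  have zs1 : (1:ℤ) ≤ se := by exact_mod_cast hepos
  obtain ⟨zBA, zAS⟩ := endgameBL (a:ℤ) (b:ℤ) (se:ℤ) (n:ℤ) key k1 zsa zab zba zs1
  have hbeqa : b = a := by exact_mod_cast zBA
  have hase : a = se := by exact_mod_cast zAS
  have hn3 : n = 3 * se := by omega
  have hdvd : se ∣ D.gcd (fun q => q.2.2) := by
    apply Finset.dvd_gcd
    intro q hq
    rcases hallq q hq with rfl | rfl | rfl | rfl | rfl | rfl <;> dsimp only <;>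
      first | exact ⟨1, by omega⟩ | exact ⟨2, by omega⟩
  rw [hg] at hdvd
  have : se = 1 := Nat.dvd_one.mp hdvd
  omega

lemma classify {n : ℕ} {q : ℕ × ℕ × ℕ} (h : ¬ Cornered n q) :
    Bonly n q ∨ Tonly n q ∨ Lonly n q ∨ Ronly n q ∨ Inside n q := by
  simp only [Cornered, Bonly, Tonly, Lonly, Ronly, Inside] at h ⊢
  omega

lemma master {n : ℕ} {D : Finset (ℕ × ℕ × ℕ)} (hC : Core n D) (h6 : D.card = 6)
    (hg : D.gcd (fun q => q.2.2) = 1) : n = 3 := by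
  classical
  have hcard2 : 1 < D.card := by omega
  obtain ⟨e0, he0, f0, hf0, hef0⟩ := Finset.one_lt_card.mp hcard2
  have hn : 0 < n := by
    obtain ⟨h1, h2, h3⟩ := hC.1 e0 he0
    omega
  obtain ⟨a,b,c,d,hA,hB,hTL,hTR,ha,han,hb,hbn,hc,hcn,hd,hdn⟩ := corners hC he0 hf0 hef0 hn
  have pin : ∀ q ∈ D, Cornered n q →
      q = (0,0,a) ∨ q = (n-b,0,b) ∨ q = (0,n-c,c) ∨ q = (n-d,n-d,d) :=
    fun q hq hcor => cornered_pin hC hn hA hB hTL hTR ha hb hbn hc hcn hd hdn hq hcor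
  set C4 : Finset (ℕ×ℕ×ℕ) := {(0,0,a), (n-b,0,b), (0,n-c,c), (n-d,n-d,d)} with hC4
  have hC4sub : C4 ⊆ D := by
    simp only [hC4, Finset.insert_subset_iff, Finset.singleton_subset_iff]
    exact ⟨hA, hB, hTL, hTR⟩
  have hC4card : C4.card = 4 := by
    rw [hC4]
    rw [Finset.card_insert_of_notMem (by simp [Prod.ext_iff]; omega),
      Finset.card_insert_of_notMem (by simp [Prod.ext_iff]; omega),
      Finset.card_insert_of_notMem (by simp [Prod.ext_iff]; omega),
      Finset.card_singleton]
  have hEcard : (D \ C4).card = 2 := by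
    rw [Finset.card_sdiff_of_subset hC4sub]; omega
  obtain ⟨e, f, hef, hEeq⟩ := Finset.card_eq_two.mp hEcard
  have heE : e ∈ D \ C4 := by rw [hEeq]; simp
  have hfE : f ∈ D \ C4 := by rw [hEeq]; simp
  have heD : e ∈ D := (Finset.mem_sdiff.mp heE).1
  have hfD : f ∈ D := (Finset.mem_sdiff.mp hfE).1
  have heC : e ∉ C4 := (Finset.mem_sdiff.mp heE).2
  have hfC : f ∉ C4 := (Finset.mem_sdiff.mp hfE).2
  have hcls : ∀ q ∈ D, q = e ∨ q = f ∨ Cornered n q := by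
    intro q hq
    by_cases hqC : q ∈ C4
    · right; right
      simp only [hC4, Finset.mem_insert, Finset.mem_singleton] at hqC
      rcases hqC with rfl | rfl | rfl | rfl <;> simp [Cornered] <;> omega
    · have : q ∈ D \ C4 := Finset.mem_sdiff.mpr ⟨hq, hqC⟩
      rw [hEeq] at this
      simp only [Finset.mem_insert, Finset.mem_singleton] at this
      tauto
  have hS : Setup n D e f := ⟨hC, heD, hfD, hef, hcls⟩
  have hnce : ¬ Cornered n e := by
    intro hcor
    rcases pin e heD hcor with rfl | rfl | rfl | rfl <;> simp [hC4] at heC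
  have hncf : ¬ Cornered n f := by
    intro hcor
    rcases pin f hfD hcor with rfl | rfl | rfl | rfl <;> simp [hC4] at hfC
  -- gcd transfer
  have hgs : ∀ (E : Finset (ℕ×ℕ×ℕ)),
      (E.image (sh n)).gcd (fun q => q.2.2) = E.gcd (fun q => q.2.2) :=
    fun E => gcd_image_side sh (fun _ => rfl) E
  have hgv : ∀ (E : Finset (ℕ×ℕ×ℕ)),
      (E.image (sv n)).gcd (fun q => q.2.2) = E.gcd (fun q => q.2.2) :=
    fun E => gcd_image_side sv (fun _ => rfl) E
  have hgt : ∀ (E : Finset (ℕ×ℕ×ℕ)),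
      (E.image (st n)).gcd (fun q => q.2.2) = E.gcd (fun q => q.2.2) :=
    fun E => gcd_image_side st (fun _ => rfl) E
  rcases classify hnce with he' | he' | he' | he' | he' <;>
    rcases classify hncf with hf' | hf' | hf' | hf' | hf'
  -- e Bonly
  · exact ((caseBB hS he' hf')).elim
  · exact ((caseBT hS he' hf')).elim
  · exact caseBL hS hg he' hf'
  · -- (B,R) : apply sh
    exact caseBL (setup_sh hS) (by rw [hgs]; exact hg)
      (sh_B (hC.1 e heD).2.1 he') (sh_RL (hC.1 f hfD).2.1 hf')
  · exact (caseBI hS he' hf').elim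
  -- e Tonly
  · exact (caseBT (setup_swap hS) hf' he').elim
  · exact (caseBB (setup_sv hS) (sv_TB (hC.1 e heD).2.2 he') (sv_TB (hC.1 f hfD).2.2 hf')).elim
  · exact caseBL (setup_sv hS) (by rw [hgv]; exact hg)
      (sv_TB (hC.1 e heD).2.2 he') (sv_L (hC.1 f hfD).2.2 hf')
  · -- (T,R): sv then sh
    have hS1 := setup_sv hS
    have hC1 := core_sv hC
    have he1 : sv n e ∈ D.image (sv n) := Finset.mem_image_of_mem _ heD
    have hf1 : sv n f ∈ D.image (sv n) := Finset.mem_image_of_mem _ hfD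
    exact caseBL (setup_sh hS1) (by rw [hgs, hgv]; exact hg)
      (sh_B (hC1.1 _ he1).2.1 (sv_TB (hC.1 e heD).2.2 he'))
      (sh_RL (hC1.1 _ hf1).2.1 (sv_R (hC.1 f hfD).2.2 hf'))
  · exact (caseBI (setup_sv hS) (sv_TB (hC.1 e heD).2.2 he') (sv_I (hC.1 f hfD).2.2 hf')).elim
  -- e Lonly
  · exact caseBL (setup_swap hS) hg hf' he'
  · -- (L,T): swap -> (T,L) -> sv
    exact caseBL (setup_sv (setup_swap hS)) (by rw [hgv]; exact hg)
      (sv_TB (hC.1 f hfD).2.2 hf') (sv_L (hC.1 e heD).2.2 he')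
  · exact (caseBB (setup_st hS) (st_LB he') (st_LB hf')).elim
  · exact (caseBT (setup_st hS) (st_LB he') (st_RT hf')).elim
  · exact (caseBI (setup_st hS) (st_LB he') (st_I hf')).elim
  -- e Ronly
  · -- (R,B): swap -> (B,R)
    exact caseBL (setup_sh (setup_swap hS)) (by rw [hgs]; exact hg)
      (sh_B (hC.1 f hfD).2.1 hf') (sh_RL (hC.1 e heD).2.1 he')
  · -- (R,T): swap -> (T,R)
    have hS1 := setup_sv (setup_swap hS)
    have hC1 := core_sv hC
    have he1 : sv n e ∈ D.image (sv n) := Finset.mem_image_of_mem _ heD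
    have hf1 : sv n f ∈ D.image (sv n) := Finset.mem_image_of_mem _ hfD
    exact caseBL (setup_sh hS1) (by rw [hgs, hgv]; exact hg)
      (sh_B (hC1.1 _ hf1).2.1 (sv_TB (hC.1 f hfD).2.2 hf'))
      (sh_RL (hC1.1 _ he1).2.1 (sv_R (hC.1 e heD).2.2 he'))
  · -- (R,L): st -> (T,B), swap -> (B,T)
    exact (caseBT (setup_swap (setup_st hS)) (st_LB hf') (st_RT he')).elim
  · -- (R,R): st -> (T,T) -> sv -> (B,B)
    have hC1 := core_st hC
    have he1 : st n e ∈ D.image (st n) := Finset.mem_image_of_mem _ heD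
    have hf1 : st n f ∈ D.image (st n) := Finset.mem_image_of_mem _ hfD
    exact (caseBB (setup_sv (setup_st hS))
      (sv_TB (hC1.1 _ he1).2.2 (st_RT he'))
      (sv_TB (hC1.1 _ hf1).2.2 (st_RT hf'))).elim
  · -- (R,I): st -> (T,I) -> sv -> (B,I)
    have hC1 := core_st hC
    have he1 : st n e ∈ D.image (st n) := Finset.mem_image_of_mem _ heD
    have hf1 : st n f ∈ D.image (st n) := Finset.mem_image_of_mem _ hfD
    exact (caseBI (setup_sv (setup_st hS))
      (sv_TB (hC1.1 _ he1).2.2 (st_RT he'))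
      (sv_I (hC1.1 _ hf1).2.2 (st_I hf'))).elim
  -- e Inside
  · exact (caseBI (setup_swap hS) hf' he').elim
  · exact (caseBI (setup_sv (setup_swap hS)) (sv_TB (hC.1 f hfD).2.2 hf')
      (sv_I (hC.1 e heD).2.2 he')).elim
  · exact (caseBI (setup_st (setup_swap hS)) (st_LB hf') (st_I he')).elim
  · -- (I,R): swap -> (R,I)
    have hC1 := core_st hC
    have he1 : st n e ∈ D.image (st n) := Finset.mem_image_of_mem _ heD
    have hf1 : st n f ∈ D.image (st n) := Finset.mem_image_of_mem _ hfD
    exact (caseBI (setup_sv (setup_st (setup_swap hS)))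
      (sv_TB (hC1.1 _ hf1).2.2 (st_RT hf'))
      (sv_I (hC1.1 _ he1).2.2 (st_I he'))).elim
  · exact (caseII hS he' hf').elim

lemma sides_small {D : Finset (ℕ × ℕ × ℕ)} (hC : Core 3 D)
    (hg : D.gcd (fun q => q.2.2) = 1) : ∀ q ∈ D, q.2.2 = 1 ∨ q.2.2 = 2 := by
  intro q hq
  obtain ⟨hpos, hx, hy⟩ := hC.1 q hq
  by_contra hcon
  have hs3 : q.2.2 = 3 := by omega
  have hx0 : q.1 = 0 := by omega
  have hy0 : q.2.1 = 0 := by omega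
  have hall : ∀ r ∈ D, r = q := by
    intro r hr
    obtain ⟨hrpos, hrx, hry⟩ := hC.1 r hr
    have o1 : Owns r r.1 r.2.1 := ⟨le_rfl, by omega, le_rfl, by omega⟩
    have o2 : Owns q r.1 r.2.1 := by
      refine ⟨by omega, by omega, by omega, by omega⟩
    exact owns_unique hC hr hq (by omega) (by omega) o1 o2
  have hDq : D = {q} := Finset.eq_singleton_iff_unique_mem.mpr ⟨hq, hall⟩
  rw [hDq] at hg
  simp [Finset.gcd_singleton] at hg
  omega

lemma two_at_most_one {D : Finset (ℕ × ℕ × ℕ)} (hC : Core 3 D) :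
    (D.filter (fun q => q.2.2 = 2)).card ≤ 1 := by
  apply Finset.card_le_one.mpr
  intro q hq q' hq'
  rw [Finset.mem_filter] at hq hq'
  obtain ⟨hqD, hq2⟩ := hq
  obtain ⟨hq'D, hq'2⟩ := hq'
  obtain ⟨_, hx, hy⟩ := hC.1 q hqD
  obtain ⟨_, hx', hy'⟩ := hC.1 q' hq'D
  have o1 : Owns q 1 1 := ⟨by omega, by omega, by omega, by omega⟩
  have o2 : Owns q' 1 1 := ⟨by omega, by omega, by omega, by omega⟩
  exact owns_unique hC hqD hq'D (by omega) (by omega) o1 o2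

lemma count_split {D : Finset (ℕ × ℕ × ℕ)} (hC : Core 3 D)
    (hsides : ∀ q ∈ D, q.2.2 = 1 ∨ q.2.2 = 2) :
    (D.filter (fun q => q.2.2 = 1)).card + (D.filter (fun q => q.2.2 = 2)).card = D.card ∧
    (D.filter (fun q => q.2.2 = 1)).card + 4 * (D.filter (fun q => q.2.2 = 2)).card = 9 := by
  classical
  have hsplit := Finset.card_filter_add_card_filter_not
    (s := D) (p := fun q => q.2.2 = 1)
  have hfeq : D.filter (fun q => ¬ q.2.2 = 1) = D.filter (fun q => q.2.2 = 2) := by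
    apply Finset.filter_congr
    intro q hq
    rcases hsides q hq with h | h <;> simp [h]
  rw [hfeq] at hsplit
  constructor
  · exact hsplit
  · have harea := area_core hC
    have hs := Finset.sum_filter_add_sum_filter_not D (fun q => q.2.2 = 1)
      (fun q => q.2.2 * q.2.2)
    rw [hfeq] at hs
    have h1 : ∑ q ∈ D.filter (fun q => q.2.2 = 1), q.2.2 * q.2.2
        = (D.filter (fun q => q.2.2 = 1)).card := by
      rw [Finset.card_eq_sum_ones]
      apply Finset.sum_congr rfl
      intro q hq
      rw [Finset.mem_filter] at hq
      rw [hq.2]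
    have h2 : ∑ q ∈ D.filter (fun q => q.2.2 = 2), q.2.2 * q.2.2
        = 4 * (D.filter (fun q => q.2.2 = 2)).card := by
      rw [Finset.card_eq_sum_ones, Finset.mul_sum]
      apply Finset.sum_congr rfl
      intro q hq
      rw [Finset.mem_filter] at hq
      rw [hq.2]
      norm_num
    rw [h1, h2, harea] at hs
    omega

lemma n3_structure {D : Finset (ℕ × ℕ × ℕ)} (hC : Core 3 D) (h6 : D.card = 6)
    (hg : D.gcd (fun q => q.2.2) = 1) :
    (D.filter (fun q => q.2.2 = 2)).card = 1 ∧ (D.filter (fun q => q.2.2 = 1)).card = 5 := by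
  obtain ⟨hsum, harea⟩ := count_split hC (sides_small hC hg)
  omega

lemma lower_bound {D : Finset (ℕ × ℕ × ℕ)} (hC : Core 3 D)
    (hg : D.gcd (fun q => q.2.2) = 1) : 6 ≤ D.card := by
  obtain ⟨hsum, harea⟩ := count_split hC (sides_small hC hg)
  have h1 := two_at_most_one hC
  omega

lemma exists_D3 : ∃ D : Finset (ℕ × ℕ × ℕ), IsPrimeDissection 3 D ∧ D.card = 6 := by
  refine ⟨{(0,0,1),(1,0,1),(2,0,1),(0,1,1),(0,2,1),(1,1,2)}, ⟨⟨?_, ?_, ?_⟩, ?_⟩, ?_⟩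
  · decide
  · apply Set.ext
    rintro ⟨p1, p2⟩
    simp only [Set.mem_iUnion, Set.mem_prod, Set.mem_Icc, Finset.mem_insert,
      Finset.mem_singleton, closedSq, exists_prop]
    constructor
    · rintro ⟨q, (rfl|rfl|rfl|rfl|rfl|rfl), ⟨h1, h2⟩, h3, h4⟩ <;>
        push_cast at h1 h2 h3 h4 ⊢ <;>
        refine ⟨⟨by linarith, by linarith⟩, by linarith, by linarith⟩
    · rintro ⟨⟨h1, h2⟩, h3, h4⟩
      push_cast at h2 h4
      rcases le_or_gt p2 1 with hy | hy
      · rcases le_or_gt p1 1 with hx | hx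
        · exact ⟨(0,0,1), by tauto, by push_cast; constructor <;> constructor <;> linarith⟩
        · rcases le_or_gt p1 2 with hx2 | hx2
          · exact ⟨(1,0,1), by tauto, by push_cast; constructor <;> constructor <;> linarith⟩
          · exact ⟨(2,0,1), by tauto, by push_cast; constructor <;> constructor <;> linarith⟩
      · rcases le_or_gt p1 1 with hx | hx
        · rcases le_or_gt p2 2 with hy2 | hy2
          · exact ⟨(0,1,1), by tauto, by push_cast; constructor <;> constructor <;> linarith⟩
          · exact ⟨(0,2,1), by tauto, by push_cast; constructor <;> constructor <;> linarith⟩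
        · exact ⟨(1,1,2), by tauto, by push_cast; constructor <;> constructor <;> linarith⟩
  · intro q hq q' hq' hne
    apply Set.eq_empty_iff_forall_notMem.mpr
    rintro ⟨p1, p2⟩ ⟨hp, hp'⟩
    fin_cases hq <;> fin_cases hq' <;>
      simp only [openSq, Set.mem_prod, Set.mem_Ioo] at hp hp' <;>
      push_cast at hp hp' <;>
      first
        | exact hne rfl
        | (obtain ⟨⟨a1, a2⟩, a3, a4⟩ := hp; obtain ⟨⟨b1, b2⟩, b3, b4⟩ := hp'; linarith)
  · decide
  · decide

theorem order_six_prime_dissections :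
    (∀ (n : ℕ) (D : Finset (ℕ × ℕ × ℕ)), IsPrimeDissection n D → D.card = 6 →
      n = 3 ∧ (D.filter (fun q => q.2.2 = 2)).card = 1 ∧
        (D.filter (fun q => q.2.2 = 1)).card = 5) ∧
    (∃ D : Finset (ℕ × ℕ × ℕ), IsPrimeDissection 3 D ∧ D.card = 6) ∧
    (∀ D : Finset (ℕ × ℕ × ℕ), IsPrimeDissection 3 D → 6 ≤ D.card) := by
  refine ⟨?_, exists_D3, ?_⟩
  · intro n D hP h6
    have hC := core_of_isDissection hP.1
    have hn := master hC h6 hP.2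
    subst hn
    obtain ⟨h2, h1⟩ := n3_structure hC h6 hP.2
    exact ⟨rfl, h2, h1⟩
  · intro D hP
    exact lower_bound (core_of_isDissection hP.1) hP.2
end
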